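/- arXiv:math/0608431 — 7 statements merged into one kernel-verified Lean document; each statement's English description precedes it below -/
import Mathlib

section
/- If a probability measure on the natural extension of a transitive subshift of finite type is of product form μ* × μ and is holonomic, then μ is σ-invariant. -/
open MeasureTheory

section AubryMather

variable {r : ℕ} {M : Fin r → Fin r → Bool}

/-- One-sided subshift of finite type on `r` symbols with transition matrix `M`. -/
abbrev SigSp (r : ℕ) (M : Fin r → Fin r → Bool) :=
  {x : ℕ → Fin r // ∀ j, M (x j) (x (j + 1)) = true}

/-- The dual subshift, with transposed transition matrix (coordinates `(…, y₁, y₀)`). -/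
abbrev DualSp (r : ℕ) (M : Fin r → Fin r → Bool) :=
  {y : ℕ → Fin r // ∀ j, M (y (j + 1)) (y j) = true}

/-- The natural extension `Σ̂ ⊂ Σ* × Σ`: pairs `(y,x)` with `M (y₀, x₀) = 1`. -/
abbrev NatExt (r : ℕ) (M : Fin r → Fin r → Bool) :=
  {p : DualSp r M × SigSp r M // M (p.1.1 0) (p.2.1 0) = true}

/-- Prepend a symbol to a sequence. -/
def prepend (a : Fin r) (x : ℕ → Fin r) : ℕ → Fin r
  | 0 => a
  | m + 1 => x m

/-- The left shift `σ` on `Σ`. -/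
def shiftS (x : SigSp r M) : SigSp r M := ⟨fun n => x.1 (n + 1), fun j => x.2 (j + 1)⟩

/-- The projection `π₁(y,x) = x`. -/
def proj1 (p : NatExt r M) : SigSp r M := p.1.2

/-- `τ(y,x) = τ_y(x) = (y₀, x₀, x₁, …)`. -/
def tau (p : NatExt r M) : SigSp r M :=
  ⟨prepend (p.1.1.1 0) p.1.2.1, by
    intro j
    cases j with
    | zero => exact p.2
    | succ m => exact p.1.2.2 m⟩

/-- The two-sided shift `σ̂` on the natural extension. -/
def hatShift (p : NatExt r M) : NatExt r M :=
  ⟨(⟨prepend (p.1.2.1 0) p.1.1.1, by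
      intro j
      cases j with
      | zero => exact p.2
      | succ m => exact p.1.1.2 m⟩, shiftS p.1.2), p.1.2.2 0⟩

/-- Holonomic probability measures on `Σ̂`. -/
def Holonomic (μ : Measure (NatExt r M)) : Prop :=
  IsProbabilityMeasure μ ∧
    ∀ f : C(SigSp r M, ℝ), (∫ p, f (tau p) ∂μ) = ∫ p, f (proj1 p) ∂μ

/-- `β_A`, the maximal holonomic value of the potential `A`. -/
noncomputable def betaA (A : NatExt r M → ℝ) : ℝ :=
  ⨆ μ : {μ : Measure (NatExt r M) // Holonomic μ}, ∫ p, A p ∂(μ.1)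

open Classical in
/-- The metric `d(x, x̄) = λ^{min {j : x_j ≠ x̄_j}}` on `Σ`. -/
noncomputable def dS (lam : ℝ) (x x' : SigSp r M) : ℝ :=
  if h : x.1 = x'.1 then 0
  else lam ^ Nat.find (show ∃ j, x.1 j ≠ x'.1 j from Function.ne_iff.mp h)

open Classical in
/-- The analogous metric on `Σ*`. -/
noncomputable def dDual (lam : ℝ) (y y' : DualSp r M) : ℝ :=
  if h : y.1 = y'.1 then 0
  else lam ^ Nat.find (show ∃ j, y.1 j ≠ y'.1 j from Function.ne_iff.mp h)

/-- The metric on `Σ̂ ⊂ Σ* × Σ`. -/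
noncomputable def dHat (lam : ℝ) (p q : NatExt r M) : ℝ :=
  max (dDual lam p.1.1 q.1.1) (dS lam p.1.2 q.1.2)

/-- `u` is `θ`-Hölder on `Σ` with constant `C`. -/
def HolderOnSig (lam θ C : ℝ) (u : SigSp r M → ℝ) : Prop :=
  ∀ x x', |u x - u x'| ≤ C * (dS lam x x') ^ θ

/-- `A` is `θ`-Hölder on `Σ̂` with constant `C`. -/
def HolderOnExt (lam θ C : ℝ) (A : NatExt r M → ℝ) : Prop :=
  ∀ p q, |A p - A q| ≤ C * (dHat lam p q) ^ θ

/-- `(Σ,σ)` is (topologically) transitive. -/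
def TransitiveShift (r : ℕ) (M : Fin r → Fin r → Bool) : Prop :=
  ∀ U V : Set (SigSp r M), IsOpen U → IsOpen V → U.Nonempty → V.Nonempty →
    ∃ n : ℕ, (shiftS^[n] '' U ∩ V).Nonempty

/-- `(Σ,σ)` is topologically mixing. -/
def MixingShift (r : ℕ) (M : Fin r → Fin r → Bool) : Prop :=
  ∀ U V : Set (SigSp r M), IsOpen U → IsOpen V → U.Nonempty → V.Nonempty →
    ∃ K : ℕ, ∀ k > K, (shiftS^[k] '' U ∩ V).Nonempty

/-- A chain of length `k` starting at `x`: `x⁰ = x`, `x^{j+1} = τ_{yʲ}(xʲ)`. -/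
def IsChainFrom (x : SigSp r M) (k : ℕ) (p : ℕ → NatExt r M) : Prop :=
  (1 ≤ k → proj1 (p 0) = x) ∧ ∀ j, j + 1 < k → proj1 (p (j + 1)) = tau (p j)

/-- A path in `P(x, x̄, ε)`: begins at `x̄`, ends within `ε` of `x`. -/
def InPath (lam ε : ℝ) (x xbar : SigSp r M) (k : ℕ) (p : ℕ → NatExt r M) : Prop :=
  1 ≤ k ∧ proj1 (p 0) = xbar ∧ (∀ j, j + 1 < k → proj1 (p (j + 1)) = tau (p j)) ∧
    dS lam (tau (p (k - 1))) x < ε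

/-- `S_A^ε(x, x̄)`. -/
noncomputable def SAeps (lam : ℝ) (A : NatExt r M → ℝ) (ε : ℝ) (x xbar : SigSp r M) : EReal :=
  sInf {v : EReal | ∃ k p, InPath lam ε x xbar k p ∧
    v = ((- ∑ j ∈ Finset.range k, (A (p j) - betaA A) : ℝ) : EReal)}

/-- The Mañé potential `S_A(x, x̄) = lim_{ε→0} S_A^ε(x, x̄)`. -/
noncomputable def ManePot (lam : ℝ) (A : NatExt r M → ℝ) (x xbar : SigSp r M) : EReal :=
  ⨆ (ε : ℝ) (_ : 0 < ε), SAeps lam A ε x xbar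

/-- `x` is non-wandering with respect to `A`. -/
def NonWand (lam : ℝ) (A : NatExt r M → ℝ) (x : SigSp r M) : Prop :=
  ∀ ε > 0, ∃ k p, InPath lam ε x x k p ∧
    |∑ j ∈ Finset.range k, (A (p j) - betaA A)| < ε

/-- `x` is `u`-connected to `x̄`. -/
def UConnected (lam : ℝ) (A : NatExt r M → ℝ) (u : SigSp r M → ℝ)
    (x xbar : SigSp r M) : Prop :=
  ∀ ε > 0, ∃ k p, InPath lam ε x xbar k p ∧
    |∑ j ∈ Finset.range k, (A (p j) - betaA A) - (u x - u xbar)| < ε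

/-- A (continuous) sub-action for `A`. -/
def SubAction (A : NatExt r M → ℝ) (u : SigSp r M → ℝ) : Prop :=
  Continuous u ∧ ∀ p : NatExt r M, u (proj1 p) ≤ u (tau p) - A p + betaA A

/-- A calibrated sub-action for `A`:
`u(x) = min_{y ∈ Σ*_x} [u(τ_y(x)) − A(y,x) + β_A]`. -/
def Calibrated (A : NatExt r M → ℝ) (u : SigSp r M → ℝ) : Prop :=
  Continuous u ∧ ∀ x : SigSp r M,
    IsLeast {v : ℝ | ∃ p : NatExt r M, proj1 p = x ∧ v = u (tau p) - A p + betaA A} (u x)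

/-- The candidate maximal sub-action `u_A` (for `β_A = 0`). -/
noncomputable def uMax (A : NatExt r M → ℝ) (x : SigSp r M) : ℝ :=
  sInf {v : ℝ | ∃ k p, IsChainFrom x k p ∧ v = -∑ j ∈ Finset.range k, A (p j)}

/-- The operator `L_ρ(f)(x) = ρ · min_{y ∈ Σ*_x} [f(τ_y(x)) − A(y,x)]`. -/
noncomputable def Lrho (A : NatExt r M → ℝ) (rho : ℝ) (f : SigSp r M → ℝ)
    (x : SigSp r M) : ℝ :=
  rho * sInf {v : ℝ | ∃ p : NatExt r M, proj1 p = x ∧ v = f (tau p) - A p}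

end AubryMather

/-- The (topological) support of a measure. -/
def msupport {X : Type*} [TopologicalSpace X] [MeasurableSpace X]
    (μ : MeasureTheory.Measure X) : Set X :=
  {p | ∀ U : Set X, IsOpen U → p ∈ U → 0 < μ U}



section AuxProof

variable {r : ℕ} {M : Fin r → Fin r → Bool}

instance : TopologicalSpace.PseudoMetrizableSpace (SigSp r M) :=
  TopologicalSpace.PseudoMetrizableSpace.subtype _

instance : BorelSpace (SigSp r M) := Subtype.borelSpace _

instance : BorelSpace (DualSp r M) := Subtype.borelSpace _

lemma shiftS_continuous : Continuous (shiftS (r := r) (M := M)) := by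
  have h : Continuous fun x : SigSp r M => (fun n => x.1 (n + 1) : ℕ → Fin r) :=
    continuous_pi fun n => (continuous_apply (n + 1)).comp continuous_subtype_val
  exact h.subtype_mk _

lemma shiftS_tau (p : NatExt r M) : shiftS (tau p) = proj1 p := by
  apply Subtype.ext; funext n; rfl

end AuxProof

/-- If a probability measure on the natural extension of a transitive subshift of
finite type is of product form `μ* × μ` and is holonomic, then `μ` is `σ`-invariant. -/
theorem product_holonomic_implies_invariant
    {r : ℕ} {M : Fin r → Fin r → Bool}
    (htrans : TransitiveShift r M)
    (μs : Measure (DualSp r M)) (μ : Measure (SigSp r M))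
    (μhat : Measure (NatExt r M))
    (hhol : Holonomic μhat)
    (hprod : μhat.map (Subtype.val) = μs.prod μ) :
    μ.map shiftS = μ := by
  classical
  obtain ⟨hP, hint⟩ := hhol
  have hval : Measurable (Subtype.val : NatExt r M → DualSp r M × SigSp r M) :=
    measurable_subtype_coe
  have hσ : Measurable (shiftS (r := r) (M := M)) := shiftS_continuous.measurable
  have hproj : Measurable (proj1 (r := r) (M := M)) := measurable_snd.comp hval
  haveI hmapP : IsProbabilityMeasure (μhat.map Subtype.val) :=
    Measure.isProbabilityMeasure_map hval.aemeasurable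
  haveI hprodP : IsProbabilityMeasure (μs.prod μ) := hprod ▸ hmapP
  -- total masses
  have huniv : μs Set.univ * μ Set.univ = 1 := by
    have h1 : (μs.prod μ) Set.univ = 1 := hprodP.measure_univ
    rw [Measure.prod_def] at h1
    by_cases hf : AEMeasurable (fun y : DualSp r M => Measure.map (Prod.mk y) μ) μs
    · rw [Measure.bind, Measure.join_apply MeasurableSet.univ,
        lintegral_map' (Measure.measurable_coe MeasurableSet.univ).aemeasurable hf] at h1
      have : ∀ y : DualSp r M, (Measure.map (Prod.mk y) μ) Set.univ = μ Set.univ := by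
        intro y
        rw [Measure.map_apply measurable_prodMk_left MeasurableSet.univ, Set.preimage_univ]
      simp only [this, lintegral_const] at h1
      rw [mul_comm] at h1
      exact h1
    · rw [Measure.bind, Measure.map_of_not_aemeasurable hf] at h1
      simp at h1
  have hμs0 : μs Set.univ ≠ 0 := by
    intro h; rw [h, zero_mul] at huniv; exact zero_ne_one huniv
  have hμ0 : μ Set.univ ≠ 0 := by
    intro h; rw [h, mul_zero] at huniv; exact zero_ne_one huniv
  have hμstop : μs Set.univ ≠ ⊤ := by
    intro h; rw [h, ENNReal.top_mul hμ0] at huniv; exact (ENNReal.top_ne_one) huniv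
  have hμtop : μ Set.univ ≠ ⊤ := by
    intro h; rw [h, ENNReal.mul_top hμs0] at huniv; exact (ENNReal.top_ne_one) huniv
  haveI : IsFiniteMeasure μ := ⟨hμtop.lt_top⟩
  haveI : IsFiniteMeasure μs := ⟨hμstop.lt_top⟩
  set c : ℝ := (μs Set.univ).toReal with hc
  have hcne : c ≠ 0 := ENNReal.toReal_ne_zero.mpr ⟨hμs0, hμstop⟩
  -- key marginal identity
  have key : ∀ g : C(SigSp r M, ℝ),
      (∫ p, g (proj1 p) ∂μhat) = c * ∫ x, g x ∂μ := by
    intro g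
    calc (∫ p, g (proj1 p) ∂μhat)
        = ∫ q : DualSp r M × SigSp r M, g q.2 ∂(μhat.map Subtype.val) :=
          (integral_map (f := fun q : DualSp r M × SigSp r M => g q.2) hval.aemeasurable
            (g.continuous.comp continuous_snd).aestronglyMeasurable).symm
      _ = ∫ q : DualSp r M × SigSp r M, g q.2 ∂(μs.prod μ) := by rw [hprod]
      _ = ∫ x, g x ∂((μs.prod μ).map Prod.snd) :=
          (integral_map (f := fun x : SigSp r M => g x) measurable_snd.aemeasurable
            g.continuous.aestronglyMeasurable).symm
      _ = ∫ x, g x ∂((μs Set.univ) • μ) := by rw [Measure.map_snd_prod]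
      _ = c * ∫ x, g x ∂μ := by rw [integral_smul_measure, smul_eq_mul]
  -- shift invariance of real integrals
  have realinv : ∀ g : C(SigSp r M, ℝ),
      (∫ x, g (shiftS x) ∂μ) = ∫ x, g x ∂μ := by
    intro g
    have h2 := hint (g.comp ⟨shiftS, shiftS_continuous⟩)
    simp only [ContinuousMap.comp_apply, ContinuousMap.coe_mk] at h2
    have h3 : (∫ p, g (shiftS (tau p)) ∂μhat) = ∫ p, g (proj1 p) ∂μhat := by
      simp only [shiftS_tau]
    rw [h3] at h2
    -- h2 : ∫ g(proj1) = ∫ g(σ(proj1))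
    have h4 := key g
    have h5 := key (g.comp ⟨shiftS, shiftS_continuous⟩)
    simp only [ContinuousMap.comp_apply, ContinuousMap.coe_mk] at h5
    rw [h4, h5] at h2
    exact (mul_left_cancel₀ hcne h2.symm)
  -- conclude equality of measures
  haveI : IsFiniteMeasure (μ.map shiftS) := by
    constructor
    rw [Measure.map_apply hσ MeasurableSet.univ, Set.preimage_univ]
    exact hμtop.lt_top
  apply MeasureTheory.ext_of_forall_lintegral_eq_of_IsFiniteMeasure
  intro f
  have hfm : Measurable fun x : SigSp r M => (f x : ENNReal) :=
    measurable_coe_nnreal_ennreal.comp f.continuous.measurable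
  rw [lintegral_map hfm hσ]
  set fσ : BoundedContinuousFunction (SigSp r M) NNReal :=
    f.compContinuous ⟨shiftS, shiftS_continuous⟩ with hfσ
  have e1 : (∫⁻ x, (f (shiftS x) : ENNReal) ∂μ) = ∫⁻ x, (fσ x : ENNReal) ∂μ := rfl
  rw [e1]
  have hne1 : (∫⁻ x, (fσ x : ENNReal) ∂μ) ≠ ⊤ :=
    (BoundedContinuousFunction.lintegral_lt_top_of_nnreal μ fσ).ne
  have hne2 : (∫⁻ x, (f x : ENNReal) ∂μ) ≠ ⊤ :=
    (BoundedContinuousFunction.lintegral_lt_top_of_nnreal μ f).ne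
  rw [← ENNReal.toReal_eq_toReal_iff' hne1 hne2,
    BoundedContinuousFunction.toReal_lintegral_coe_eq_integral,
    BoundedContinuousFunction.toReal_lintegral_coe_eq_integral]
  have := realinv ⟨fun x => ((f x : NNReal) : ℝ), NNReal.continuous_coe.comp f.continuous⟩
  exact this
end

section
/- For any continuous potential A: Σ̂ → ℝ, the maximal value β_A = max over holonomic probabilities μ̂ of ∫ A dμ̂ equals inf over continuous f: Σ → ℝ of max over (y,x) ∈ Σ̂ of [A(y,x) + f(x) − f(τ_y(x))]. -/
open MeasureTheory

/-!
Integrating `A + f ∘ π₁ - f ∘ τ` against a holonomic measure gives `∫ A`, so `β_A` is at most the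
infimum. Conversely, fix `ε > 0` and `N` such that `A` varies by less than `ε` on cylinders of
length `N + 1`. In the finite multigraph whose vertices are words of length `N + 1` and whose
edges are the points `p ∈ Σ̂`, running from the first `N + 1` symbols of `π₁ p` to those of `τ p`,
every cycle is shadowed by a periodic `τ`-orbit; the uniform measure on that orbit is holonomic,
so every cycle has `A`-average at most `β_A + ε`. A finite graph whose cycles have nonpositive
weight carries a potential (the largest weight of a walk ending at a vertex), and composed with
the window map it gives a locally constant `f` with `A + f ∘ π₁ - f ∘ τ ≤ β_A + ε`.
-/

open MeasureTheory Finset Topology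
open scoped ENNReal

lemma Continuous.exists_abs_sub_lt_of_forall_le_eq {X β : Type*} [TopologicalSpace X]
    [CompactSpace X] [TopologicalSpace β] [T2Space β] {c : ℕ → X → β}
    (hc : ∀ i, Continuous (c i)) (hsep : ∀ x y, (∀ i, c i x = c i y) → x = y)
    {A : X → ℝ} (hA : Continuous A) {ε : ℝ} (hε : 0 < ε) :
    ∃ N, ∀ x y, (∀ i ≤ N, c i x = c i y) → |A x - A y| < ε := by
  let V (N : ℕ) : Set (X × X) := {xy | ∀ i ≤ N, c i xy.1 = c i xy.2}
  have hV : Antitone V := fun N N' hNN' xy hxy i hi => hxy i (hi.trans hNN')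
  have hclosed (N : ℕ) : IsClosed (V N) := by
    simp only [V, Set.ofPred_forall]
    exact isClosed_biInter fun i _ =>
      isClosed_eq ((hc i).comp continuous_fst) ((hc i).comp continuous_snd)
  have hU : ∀ xy ∈ ⋂ N, V N, {xy : X × X | |A xy.1 - A xy.2| < ε} ∈ 𝓝 xy := by
    intro xy hxy
    have hdiag := hsep xy.1 xy.2 fun i => Set.mem_iInter.mp hxy i i le_rfl
    refine (isOpen_lt ((hA.comp continuous_fst).sub (hA.comp continuous_snd)).abs
      continuous_const).mem_nhds ?_
    simpa [hdiag] using hε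
  obtain ⟨N, hN⟩ := exists_subset_nhds_of_isCompact' hV.directed_ge
    (fun N => (hclosed N).isCompact) hclosed hU
  exact ⟨N, fun x y h => hN (show (x, y) ∈ V N from h)⟩

namespace AubryMather

section Graph

variable {V W : Type*} (s t : W → V)

/-- `q 0, …, q (k - 1)` is a walk in the multigraph in which the edge `e` runs from `s e` to
`t e`. -/
def IsWalk (k : ℕ) (q : ℕ → W) : Prop :=
  ∀ i, i + 1 < k → t (q i) = s (q (i + 1))

def IsCycle {k : ℕ} (q : ZMod k → W) : Prop :=
  ∀ z, t (q z) = s (q (z + 1))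

variable {s t}

lemma IsWalk.mono {k l : ℕ} {q : ℕ → W} (hq : IsWalk s t k q) (hlk : l ≤ k) :
    IsWalk s t l q :=
  fun i hi => hq i (by omega)

lemma IsWalk.shift {k : ℕ} {q : ℕ → W} (hq : IsWalk s t k q) (a : ℕ) :
    IsWalk s t (k - a) (fun i => q (a + i)) :=
  fun i hi => hq (a + i) (by omega)

lemma IsWalk.isCycle {k : ℕ} [NeZero k] {q : ℕ → W} (hq : IsWalk s t k q)
    (hclosed : t (q (k - 1)) = s (q 0)) : IsCycle s t (fun z : ZMod k => q z.val) := by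
  intro z
  have hval : (z + 1).val = (z.val + 1) % k := by
    rw [ZMod.val_add, ZMod.val_one_eq_one_mod, Nat.add_mod_mod]
  dsimp only
  rcases (Nat.add_one_le_of_lt z.val_lt).lt_or_eq with hlt | heq
  · rw [hval, Nat.mod_eq_of_lt hlt]
    exact hq _ hlt
  · rw [hval, heq, Nat.mod_self, ← hclosed, show k - 1 = z.val by omega]

lemma sum_zmod_val {β : Type*} [AddCommMonoid β] (k : ℕ) [NeZero k] (f : ℕ → β) :
    ∑ z : ZMod k, f z.val = ∑ i ∈ range k, f i := by
  obtain ⟨n, rfl⟩ := Nat.exists_eq_succ_of_ne_zero (NeZero.ne k)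
  exact Fin.sum_univ_eq_sum_range f (n + 1)

variable {w : W → ℝ}

/-- Cutting a walk at the last return to its initial vertex splits off a closed walk. -/
lemma IsWalk.sum_le_mul_card_image [DecidableEq V] {C : ℝ} (hC : 0 ≤ C) (hw : ∀ e, w e ≤ C)
    (hcyc : ∀ (k : ℕ) [NeZero k] (q : ZMod k → W), IsCycle s t q → ∑ z, w (q z) ≤ 0)
    {k : ℕ} {q : ℕ → W} (hq : IsWalk s t k q) :
    ∑ i ∈ range k, w (q i) ≤ C * #((range k).image (s ∘ q)) := by
  induction k using Nat.strong_induction_on generalizing q with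
  | _ k ih =>
  rcases k with _ | k
  · simp
  set j := Nat.findGreatest (fun i => s (q i) = s (q 0)) k
  have hjk : j ≤ k := Nat.findGreatest_le k
  have hsj : s (q j) = s (q 0) := Nat.findGreatest_spec (P := fun i => s (q i) = s (q 0))
    (Nat.zero_le k) rfl
  have hloop : ∑ i ∈ range j, w (q i) ≤ 0 := by
    rcases Nat.eq_zero_or_pos j with h0 | hpos
    · simp [h0]
    have : NeZero j := ⟨hpos.ne'⟩
    have hclosed : t (q (j - 1)) = s (q 0) := by
      rw [hq (j - 1) (by omega), Nat.sub_add_cancel hpos, hsj]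
    rw [← sum_zmod_val]
    exact hcyc j _ ((hq.mono (by omega)).isCycle hclosed)
  have hsplit : ∑ i ∈ range (k + 1), w (q i) =
      ∑ i ∈ range j, w (q i) + (w (q j) + ∑ i ∈ range (k - j), w (q (j + 1 + i))) := by
    rw [show k + 1 = j + (k - j + 1) by omega, sum_range_add, sum_range_succ', add_comm (w _)]
    simp only [add_zero, Nat.add_right_comm _ 1, add_assoc]
  have hsub : (range (k - j)).image (s ∘ fun i => q (j + 1 + i)) ⊆
      ((range (k + 1)).image (s ∘ q)).erase (s (q 0)) := by
    simp only [subset_iff, mem_image, mem_range, mem_erase, Function.comp_apply]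
    rintro _ ⟨i, hi, rfl⟩
    exact ⟨Nat.findGreatest_is_greatest (P := fun i => s (q i) = s (q 0)) (n := k) (by omega)
      (by omega), j + 1 + i, by omega, rfl⟩
  have hcard : (#((range (k - j)).image (s ∘ fun i => q (j + 1 + i))) : ℝ) + 1 ≤
      #((range (k + 1)).image (s ∘ q)) := by
    rw [← card_erase_add_one (mem_image_of_mem (s ∘ q) (mem_range.mpr k.succ_pos))]
    exact_mod_cast Nat.add_le_add_right (card_le_card hsub) 1
  have hrest := ih (k - j) (by omega) ((hq.shift (j + 1)).mono (by omega))
  have := mul_le_mul_of_nonneg_left hcard hC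
  rw [hsplit]
  nlinarith [hw (q j)]

lemma exists_potential [Finite V] (hw : BddAbove (Set.range w))
    (hcyc : ∀ (k : ℕ) [NeZero k] (q : ZMod k → W), IsCycle s t q → ∑ z, w (q z) ≤ 0) :
    ∃ g : V → ℝ, ∀ e, g (s e) + w e ≤ g (t e) := by
  classical
  have := Fintype.ofFinite V
  obtain ⟨C, hC⟩ := hw
  let weights (v : V) : Set ℝ := {x | ∃ k q, IsWalk s t k q ∧ (0 < k → t (q (k - 1)) = v) ∧
    x = ∑ i ∈ range k, w (q i)}
  have hbdd (v : V) : BddAbove (weights v) := by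
    refine ⟨max C 0 * Fintype.card V, ?_⟩
    rintro _ ⟨k, q, hq, -, rfl⟩
    refine (hq.sum_le_mul_card_image (le_max_right C 0)
      (fun e => (hC ⟨e, rfl⟩).trans (le_max_left C 0)) hcyc).trans ?_
    gcongr
    exact card_le_univ _
  have happend (e : W) : ∀ x ∈ weights (s e), x + w e ∈ weights (t e) := by
    rintro _ ⟨k, q, hq, hend, rfl⟩
    refine ⟨k + 1, Function.update q k e, fun i hi => ?_, fun _ => by simp, ?_⟩
    · rw [Function.update_of_ne (by omega)]
      rcases (Nat.lt_succ_iff.mp hi).lt_or_eq with hlt | rfl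
      · rw [Function.update_of_ne (by omega)]
        exact hq i hlt
      · rw [Function.update_self, ← hend (by omega), Nat.add_sub_cancel]
    · rw [sum_range_succ, Function.update_self]
      congr 1
      exact sum_congr rfl fun i hi => by rw [Function.update_of_ne (by simp at hi; omega)]
  refine ⟨fun v => sSup (weights v), fun e => ?_⟩
  have hne : (weights (s e)).Nonempty := ⟨0, 0, fun _ => e, fun i hi => by omega,
    fun h => absurd h (lt_irrefl 0), by simp⟩
  rw [← le_sub_iff_add_le]
  exact csSup_le hne fun x hx => le_sub_iff_add_le.mpr (le_csSup (hbdd _) (happend e x hx))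

lemma exists_isCycle [Finite V] (e₀ : W) (next : W → W) (hnext : ∀ e, t e = s (next e)) :
    ∃ (k : ℕ) (_ : NeZero k) (q : ZMod k → W), IsCycle s t q := by
  obtain ⟨a, b, hab, h⟩ := Finite.exists_ne_map_eq_of_infinite fun n => s (next^[n] e₀)
  wlog hlt : a < b generalizing a b
  · exact this b a hab.symm h.symm (by omega)
  have : NeZero (b - a) := ⟨by omega⟩
  refine ⟨b - a, inferInstance, _, IsWalk.isCycle (q := fun i => next^[a + i] e₀) ?_ ?_⟩
  · intro i _
    dsimp only
    rw [← add_assoc, Function.iterate_succ_apply', hnext]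
  · rw [hnext, ← Function.iterate_succ_apply' next, add_zero,
      show (a + (b - a - 1)).succ = b by omega, h]

end Graph

variable {r : ℕ} {M : Fin r → Fin r → Bool}

section Topology

lemma isClosed_setOf_forall_adj {α : Type*} [TopologicalSpace α] [DiscreteTopology α]
    (R : α → α → Bool) : IsClosed {x : ℕ → α | ∀ j, R (x j) (x (j + 1)) = true} := by
  simp only [Set.ofPred_forall]
  exact isClosed_iInter fun j => isClosed_eq
    ((continuous_of_discreteTopology (f := fun a : α × α => R a.1 a.2)).comp
      (f := fun x : ℕ → α => (x j, x (j + 1))) (by fun_prop))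
    continuous_const

instance : CompactSpace (SigSp r M) :=
  isCompact_iff_compactSpace.mp (isClosed_setOf_forall_adj M).isCompact

instance : CompactSpace (DualSp r M) :=
  isCompact_iff_compactSpace.mp (isClosed_setOf_forall_adj (flip M)).isCompact

instance : CompactSpace (NatExt r M) :=
  isCompact_iff_compactSpace.mp <| IsClosed.isCompact <| isClosed_eq
    ((continuous_of_discreteTopology (f := fun a : Fin r × Fin r => M a.1 a.2)).comp
      (f := fun p : DualSp r M × SigSp r M => (p.1.1 0, p.2.1 0))
      (((continuous_apply 0).comp (continuous_subtype_val.comp continuous_fst)).prodMk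
        ((continuous_apply 0).comp (continuous_subtype_val.comp continuous_snd))))
    continuous_const

instance : SecondCountableTopology (SigSp r M) :=
  TopologicalSpace.Subtype.secondCountableTopology _

lemma continuous_proj1 : Continuous (proj1 : NatExt r M → SigSp r M) :=
  continuous_snd.comp continuous_subtype_val

lemma continuous_tau : Continuous (tau : NatExt r M → SigSp r M) := by
  refine Continuous.subtype_mk (continuous_pi fun i => ?_) _
  cases i with
  | zero =>
    exact (continuous_apply 0).comp
      (continuous_subtype_val.comp (continuous_fst.comp continuous_subtype_val))
  | succ m => exact (continuous_apply m).comp (continuous_subtype_val.comp continuous_proj1)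

end Topology

/-- The pair `(yᵢ, xᵢ)` of `i`-th coordinates of `(y, x) ∈ Σ̂`. -/
def coord (i : ℕ) (p : NatExt r M) : Fin r × Fin r := (p.1.1.1 i, (proj1 p).1 i)

lemma continuous_coord (i : ℕ) : Continuous (coord (M := M) i) :=
  ((continuous_apply i).comp (continuous_subtype_val.comp
    (continuous_fst.comp continuous_subtype_val))).prodMk
    ((continuous_apply i).comp (continuous_subtype_val.comp continuous_proj1))

lemma eq_of_forall_coord_eq {p q : NatExt r M} (h : ∀ i, coord i p = coord i q) : p = q :=
  Subtype.ext <| Prod.ext (Subtype.ext <| funext fun i => congrArg Prod.fst (h i))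
    (Subtype.ext <| funext fun i => congrArg Prod.snd (h i))

def window (n : ℕ) (x : SigSp r M) : Fin n → Fin r := fun i => x.1 i

lemma continuous_window (n : ℕ) : Continuous (window (M := M) n) :=
  continuous_pi fun i => (continuous_apply (i : ℕ)).comp continuous_subtype_val

def hatShiftInv (p : NatExt r M) : NatExt r M :=
  ⟨(⟨fun n => p.1.1.1 (n + 1), fun j => p.1.1.2 (j + 1)⟩, tau p), p.1.1.2 0⟩

lemma tau_val_zero (p : NatExt r M) : (tau p).1 0 = p.1.1.1 0 := rfl

lemma tau_val_succ (p : NatExt r M) (m : ℕ) : (tau p).1 (m + 1) = (proj1 p).1 m := rfl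

section Shadow

variable {k N : ℕ} {Q : ZMod k → NatExt r M}

lemma proj1_val_eq_of_isCycle_window
    (hQ : IsCycle (window (N + 1) ∘ proj1) (window (N + 1) ∘ tau) Q) {i : ℕ} (hi : i ≤ N)
    (z : ZMod k) : (proj1 (Q z)).1 i = (proj1 (Q (z - i))).1 0 := by
  induction i generalizing z with
  | zero => simp
  | succ i ih =>
    have h := congrFun (hQ (z - 1)) ⟨i + 1, by omega⟩
    simp only [Function.comp_apply, window, sub_add_cancel, tau_val_succ] at h
    rw [← h, ih (by omega), Nat.cast_succ, sub_sub, add_comm (1 : ZMod k)]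

/-- The shadow keeps the `y`'s of `Q` and reads its `x`'s backwards along the cycle from the
symbols `x₀` of the `Q z`. -/
lemma exists_isCycle_shadow (hQ : IsCycle (window (N + 1) ∘ proj1) (window (N + 1) ∘ tau) Q) :
    ∃ P : ZMod k → NatExt r M,
      IsCycle proj1 tau P ∧ ∀ z, ∀ i ≤ N, coord i (P z) = coord i (Q z) := by
  let a (z : ZMod k) : Fin r := (proj1 (Q z)).1 0
  have hy (z : ZMod k) : (Q z).1.1.1 0 = a (z + 1) := congrFun (hQ z) 0
  have hadm (z : ZMod k) (j : ℕ) : M (a (z - j)) (a (z - (j + 1 : ℕ))) = true := by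
    have h := (Q (z - (j + 1 : ℕ))).2
    rwa [hy, show z - ((j + 1 : ℕ) : ZMod k) + 1 = z - j by push_cast; ring] at h
  let x (z : ZMod k) : SigSp r M := ⟨fun j => a (z - j), hadm z⟩
  let P (z : ZMod k) : NatExt r M := ⟨((Q z).1.1, x z), by simpa [x, a, proj1] using (Q z).2⟩
  refine ⟨P, fun z => Subtype.ext (funext fun j => ?_), fun z i hi => ?_⟩
  · cases j with
    | zero => simpa [P, x, tau_val_zero, proj1] using hy z
    | succ m =>
      simp only [P, x, tau_val_succ, proj1]
      congr 1
      push_cast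
      ring
  · simp only [coord, P, x]
    rw [proj1_val_eq_of_isCycle_window hQ hi]
    rfl

end Shadow

section DiracAverage

variable {ι X : Type*} [Fintype ι] [MeasurableSpace X]

noncomputable def diracAverage (P : ι → X) : Measure X :=
  (Fintype.card ι : ℝ≥0∞)⁻¹ • ∑ i, Measure.dirac (P i)

instance [Nonempty ι] (P : ι → X) : IsProbabilityMeasure (diracAverage P) := by
  constructor
  simp [diracAverage, ENNReal.inv_mul_cancel]

lemma integral_diracAverage [MeasurableSingletonClass X] (P : ι → X) (g : X → ℝ) :
    ∫ x, g x ∂diracAverage P = (∑ i, g (P i)) / Fintype.card ι := by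
  rw [diracAverage, integral_smul_measure,
    integral_finsetSum_measure fun i _ => integrable_dirac enorm_lt_top]
  simp [integral_dirac, div_eq_inv_mul]

end DiracAverage

lemma holonomic_diracAverage {k : ℕ} [NeZero k] {P : ZMod k → NatExt r M}
    (hP : IsCycle proj1 tau P) : Holonomic (diracAverage P) := by
  refine ⟨inferInstance, fun f => ?_⟩
  simp only [integral_diracAverage, show ∀ z, tau (P z) = proj1 (P (z + 1)) from hP]
  congr 1
  exact Fintype.sum_equiv (Equiv.addRight 1) _ _ fun _ => rfl

section Beta

variable {A : NatExt r M → ℝ}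

lemma integral_le_iSup (hA : Continuous A) (f : C(SigSp r M, ℝ)) {μ : Measure (NatExt r M)}
    (hμ : Holonomic μ) : ∫ p, A p ∂μ ≤ ⨆ p, (A p + f (proj1 p) - f (tau p)) := by
  have := hμ.1
  have hcont : Continuous fun p => A p + f (proj1 p) - f (tau p) :=
    (hA.add (f.continuous.comp continuous_proj1)).sub (f.continuous.comp continuous_tau)
  have hint {g : NatExt r M → ℝ} (hg : Continuous g) : Integrable g μ :=
    hg.integrable_of_hasCompactSupport (HasCompactSupport.of_compactSpace g)
  have hf1 : Integrable (fun p => f (proj1 p)) μ := hint (f.continuous.comp continuous_proj1)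
  have hf2 : Integrable (fun p => f (tau p)) μ := hint (f.continuous.comp continuous_tau)
  calc ∫ p, A p ∂μ = ∫ p, (A p + f (proj1 p) - f (tau p)) ∂μ := by
        rw [integral_sub (f := fun p => A p + f (proj1 p)) ((hint hA).add hf1) hf2,
          integral_add (hint hA) hf1, hμ.2 f, add_sub_cancel_right]
    _ ≤ ∫ _, (⨆ p, (A p + f (proj1 p) - f (tau p))) ∂μ :=
        integral_mono (hint hcont) (integrable_const _)
          (le_ciSup (isCompact_range hcont).bddAbove)
    _ = ⨆ p, (A p + f (proj1 p) - f (tau p)) := by simp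

lemma integral_le_betaA (hA : Continuous A) {μ : Measure (NatExt r M)} (hμ : Holonomic μ) :
    ∫ p, A p ∂μ ≤ betaA A :=
  le_ciSup (f := fun μ : {μ // Holonomic μ} => ∫ p, A p ∂μ.1)
    ⟨_, Set.forall_mem_range.2 fun μ => integral_le_iSup hA 0 μ.2⟩ ⟨μ, hμ⟩

lemma exists_holonomic [Nonempty (NatExt r M)] : ∃ μ : Measure (NatExt r M), Holonomic μ := by
  obtain ⟨k, _, Q, hQ⟩ := exists_isCycle (s := window 1 ∘ proj1) (t := window 1 ∘ tau)
    (Classical.arbitrary (NatExt r M)) hatShiftInv fun _ => rfl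
  obtain ⟨P, hP, -⟩ := exists_isCycle_shadow (N := 0) hQ
  exact ⟨_, holonomic_diracAverage hP⟩

lemma betaA_le_iSup [Nonempty (NatExt r M)] (hA : Continuous A) (f : C(SigSp r M, ℝ)) :
    betaA A ≤ ⨆ p, (A p + f (proj1 p) - f (tau p)) := by
  obtain ⟨μ, hμ⟩ := exists_holonomic (M := M)
  have : Nonempty {μ : Measure (NatExt r M) // Holonomic μ} := ⟨⟨μ, hμ⟩⟩
  exact ciSup_le fun μ => integral_le_iSup hA f μ.2

lemma sum_sub_le_zero_of_isCycle_window {ε : ℝ} {N : ℕ} (hA : Continuous A)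
    (hN : ∀ p q, (∀ i ≤ N, coord i p = coord i q) → |A p - A q| < ε)
    {k : ℕ} [NeZero k] {Q : ZMod k → NatExt r M}
    (hQ : IsCycle (window (N + 1) ∘ proj1) (window (N + 1) ∘ tau) Q) :
    ∑ z, (A (Q z) - (betaA A + ε)) ≤ 0 := by
  obtain ⟨P, hP, hPQ⟩ := exists_isCycle_shadow hQ
  have hμ := integral_le_betaA hA (holonomic_diracAverage hP)
  rw [integral_diracAverage, ZMod.card, div_le_iff₀ (by simp [Nat.pos_of_neZero])] at hμ
  have hclose (z : ZMod k) : A (Q z) < A (P z) + ε := by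
    linarith [(abs_lt.1 (hN (Q z) (P z) fun i hi => (hPQ z i hi).symm)).2]
  calc ∑ z, (A (Q z) - (betaA A + ε)) ≤ ∑ z, (A (P z) - betaA A) :=
        sum_le_sum fun z _ => by linarith [hclose z]
    _ = ∑ z, A (P z) - betaA A * k := by simp [sum_sub_distrib, mul_comm]
    _ ≤ 0 := by linarith

lemma exists_iSup_le_betaA_add [Nonempty (NatExt r M)] (hA : Continuous A) {ε : ℝ}
    (hε : 0 < ε) :
    ∃ f : C(SigSp r M, ℝ), ⨆ p, (A p + f (proj1 p) - f (tau p)) ≤ betaA A + ε := by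
  obtain ⟨N, hN⟩ := hA.exists_abs_sub_lt_of_forall_le_eq continuous_coord
    (fun p q => eq_of_forall_coord_eq) hε
  obtain ⟨g, hg⟩ := exists_potential (s := window (N + 1) ∘ proj1) (t := window (N + 1) ∘ tau)
    (w := fun p => A p - (betaA A + ε))
    (isCompact_range (hA.sub continuous_const)).bddAbove
    fun k _ Q hQ => sum_sub_le_zero_of_isCycle_window hA hN hQ
  refine ⟨⟨g ∘ window (N + 1), continuous_of_discreteTopology.comp (continuous_window _)⟩,
    ciSup_le fun p => ?_⟩
  have := hg p
  simp only [ContinuousMap.coe_mk, Function.comp_apply] at this ⊢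
  linarith

end Beta

end AubryMather

open AubryMather

/-- the dual formula
`β_A = inf_{f ∈ C⁰(Σ)} max_{(y,x) ∈ Σ̂} [A(y,x) + f(x) − f(τ_y(x))]`. -/
theorem dual_formula
    {r : ℕ} {M : Fin r → Fin r → Bool}
    (A : NatExt r M → ℝ) (hA : Continuous A) :
    betaA A =
      ⨅ f : C(SigSp r M, ℝ), ⨆ p : NatExt r M, (A p + f (proj1 p) - f (tau p)) := by
  rcases isEmpty_or_nonempty (NatExt r M) with hempty | hne
  · have : IsEmpty {μ : Measure (NatExt r M) // Holonomic μ} :=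
      ⟨fun μ => (@nonempty_of_isProbabilityMeasure _ _ μ.1 μ.2.1).elim hempty.elim⟩
    simp [betaA]
  · refine le_antisymm (le_ciInf (betaA_le_iSup hA)) (le_of_forall_pos_le_add fun ε hε => ?_)
    obtain ⟨f, hf⟩ := exists_iSup_le_betaA_add hA hε
    exact (ciInf_le ⟨betaA A, Set.forall_mem_range.2 (betaA_le_iSup hA)⟩ f).trans hf
end

section
/- The Fenchel transform F*(μ̂) = sup_{g ∈ C⁰(Σ̂)} [∫ g dμ̂ − max(A+g)] of the convex functional F(g) = max(A+g) equals −∫ A dμ̂ when μ̂ is a Borel probability measure, and equals +∞ when μ̂ is a signed measure that is not a probability measure. -/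
open MeasureTheory

/-- A signed measure which is a (Borel) probability measure. -/
def IsProbSigned {X : Type*} [MeasurableSpace X] (μ : MeasureTheory.SignedMeasure X) : Prop :=
  (∀ s : Set X, MeasurableSet s → 0 ≤ μ s) ∧ μ Set.univ = 1

/-- The integral of `g` with respect to a signed measure, via the Jordan decomposition. -/
noncomputable def signedInt {X : Type*} [MeasurableSpace X]
    (μ : MeasureTheory.SignedMeasure X) (g : X → ℝ) : ℝ :=
  (∫ x, g x ∂μ.toJordanDecomposition.posPart) -
    ∫ x, g x ∂μ.toJordanDecomposition.negPart

/-- The Fenchel transform `F*(μ̂) = sup_{g ∈ C⁰(Σ̂)} [∫ g dμ̂ − max(A+g)]`. -/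
noncomputable def FenchelFStar {X : Type*} [MeasurableSpace X] [TopologicalSpace X]
    (A : X → ℝ) (μ : MeasureTheory.SignedMeasure X) : EReal :=
  ⨆ g : C(X, ℝ), (((signedInt μ g - ⨆ x, (A x + g x)) : ℝ) : EReal)

/-! The functional `g ↦ ∫ (A + g) dμ` is dominated by `F(g) = max (A + g)` exactly when `μ` is a
probability measure, and then `g = -A` attains the resulting bound `-∫ A dμ`. Otherwise some
continuous `h` has `∫ h dμ > max h`: a constant if the total mass is not `1`, and an Urysohn
function approximating a set of negative measure if `μ` is not positive. Along `g = t • h`,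
`t → ∞`, the Fenchel transform is unbounded. -/

open Set

section SignedIntegral

variable {X : Type*} [MeasurableSpace X] (μ : SignedMeasure X)

lemma signedInt_neg (g : X → ℝ) : signedInt μ (fun x => -g x) = -signedInt μ g := by
  simp only [signedInt, integral_neg]
  ring

lemma signedInt_const_mul (c : ℝ) (g : X → ℝ) :
    signedInt μ (fun x => c * g x) = c * signedInt μ g := by
  simp only [signedInt, integral_const_mul]
  ring

lemma signedInt_const (c : ℝ) : signedInt μ (fun _ => c) = c * μ univ := by
  rw [signedInt, integral_const, integral_const, smul_eq_mul, smul_eq_mul,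
    μ.apply_eq_posPart_real_sub_negPart_real MeasurableSet.univ]
  ring

lemma negPart_eq_zero_of_nonneg (hμ : ∀ s, MeasurableSet s → 0 ≤ μ s) :
    μ.toJordanDecomposition.negPart = 0 := by
  obtain ⟨t, ht, hpos, hneg⟩ := μ.toJordanDecomposition.mutuallySingular
  have hnegt : μ.toJordanDecomposition.negPart t = 0 := by
    have hμt := hμ t ht
    rw [μ.apply_eq_posPart_real_sub_negPart_real ht, measureReal_def, hpos] at hμt
    exact (measureReal_eq_zero_iff).mp (le_antisymm (by simpa using hμt) measureReal_nonneg)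
  rw [← Measure.measure_univ_eq_zero, ← union_compl_self t]
  exact measure_union_null hnegt hneg

lemma signedInt_eq_integral_posPart (hμ : ∀ s, MeasurableSet s → 0 ≤ μ s) (g : X → ℝ) :
    signedInt μ g = ∫ x, g x ∂μ.toJordanDecomposition.posPart := by
  rw [signedInt, negPart_eq_zero_of_nonneg μ hμ, integral_zero_measure, sub_zero]

lemma IsProbSigned.isProbabilityMeasure_posPart (hμ : IsProbSigned μ) :
    IsProbabilityMeasure μ.toJordanDecomposition.posPart := by
  constructor
  have h := μ.apply_eq_posPart_real_sub_negPart_real MeasurableSet.univ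
  rw [hμ.2, negPart_eq_zero_of_nonneg μ hμ.1, measureReal_zero_apply, sub_zero] at h
  rw [← ENNReal.ofReal_toReal (measure_ne_top _ _), ← measureReal_def, ← h, ENNReal.ofReal_one]

end SignedIntegral

lemma integral_le_ciSup {X : Type*} [MeasurableSpace X] {ν : Measure X} [IsProbabilityMeasure ν]
    {f : X → ℝ} (hf : Integrable f ν) (hb : BddAbove (range f)) : ∫ x, f x ∂ν ≤ ⨆ x, f x :=
  calc ∫ x, f x ∂ν ≤ ∫ _, (⨆ x, f x) ∂ν := integral_mono hf (integrable_const _) (le_ciSup hb)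
    _ = ⨆ x, f x := by simp

lemma exists_continuous_integral_sub_integral_lt {X : Type*} [TopologicalSpace X]
    [TopologicalSpace.PseudoMetrizableSpace X] [MeasurableSpace X] [BorelSpace X]
    (ν₁ ν₂ : Measure X) [IsFiniteMeasure ν₁] [IsFiniteMeasure ν₂]
    {s : Set X} (hs : MeasurableSet s) {ε : ℝ} (hε : 0 < ε) :
    ∃ f : C(X, ℝ), (∀ x, f x ∈ Icc 0 1) ∧
      ∫ x, f x ∂ν₁ - ∫ x, f x ∂ν₂ < ν₁.real s - ν₂.real s + ε := by
  have hδ : ENNReal.ofReal (ε / 2) ≠ 0 := by simpa using half_pos hε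
  obtain ⟨U, hsU, hU, hνU⟩ := s.exists_isOpen_lt_add (measure_ne_top ν₁ s) hδ
  obtain ⟨K, hKs, hK, hνK⟩ := hs.exists_isClosed_lt_add (measure_ne_top ν₂ s) hδ
  obtain ⟨f, hf0, hf1, hf01⟩ := exists_continuous_zero_one_of_isClosed hU.isClosed_compl hK
    (disjoint_compl_left_iff_subset.mpr (hKs.trans hsU))
  have hf_int : Integrable f ν₂ := Integrable.of_bound f.continuous.aestronglyMeasurable 1
    (ae_of_all _ fun x => abs_le.mpr ⟨by linarith [(hf01 x).1], (hf01 x).2⟩)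
  have hU_real : ν₁.real U < ν₁.real s + ε / 2 := by
    refine ENNReal.toReal_lt_of_lt_ofReal ?_
    rwa [ENNReal.ofReal_add measureReal_nonneg (half_pos hε).le, ofReal_measureReal]
  have hK_real : ν₂.real s < ν₂.real K + ε / 2 := by
    refine ENNReal.toReal_lt_of_lt_ofReal ?_
    rwa [ENNReal.ofReal_add measureReal_nonneg (half_pos hε).le, ofReal_measureReal]
  have h₁ : ∫ x, f x ∂ν₁ ≤ ν₁.real U := by
    exact (ENNReal.ofReal_le_iff_le_toReal (measure_ne_top _ _)).mp
      (integral_le_measure (fun x _ => (hf01 x).2) fun x hx => (hf0 hx).le)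
  have h₂ : ν₂.real K ≤ ∫ x, f x ∂ν₂ :=
    ENNReal.toReal_le_of_le_ofReal (integral_nonneg fun x => (hf01 x).1)
      (hf_int.measure_le_integral (ae_of_all _ fun x => (hf01 x).1) fun x hx => (hf1 hx).ge)
  exact ⟨f, hf01, by linarith⟩

section Fenchel

variable {X : Type*} [TopologicalSpace X] [MeasurableSpace X] (A : X → ℝ) (μ : SignedMeasure X)

lemma fenchelFStar_eq_neg_signedInt [CompactSpace X] [OpensMeasurableSpace X] (hA : Continuous A)
    (hμ : IsProbSigned μ) : FenchelFStar A μ = ((-signedInt μ A : ℝ) : EReal) := by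
  have := hμ.isProbabilityMeasure_posPart
  have hint {g : X → ℝ} (hg : Continuous g) : Integrable g μ.toJordanDecomposition.posPart :=
    hg.integrable_of_hasCompactSupport (.of_compactSpace g)
  apply le_antisymm
  · refine iSup_le fun g => EReal.coe_le_coe_iff.mpr ?_
    have hAg := hA.add g.continuous
    have : signedInt μ A + signedInt μ g ≤ ⨆ x, (A x + g x) := by
      rw [signedInt_eq_integral_posPart μ hμ.1, signedInt_eq_integral_posPart μ hμ.1,
        ← integral_add (hint hA) (hint g.continuous)]
      exact integral_le_ciSup (hint hAg) (isCompact_range hAg).bddAbove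
    linarith
  · refine le_of_eq_of_le ?_ (le_iSup _ ⟨fun x => -A x, hA.neg⟩)
    simp [signedInt_neg]

lemma fenchelFStar_eq_top_of_iSup_lt_signedInt [CompactSpace X] [Nonempty X]
    (hA : BddAbove (range A)) (h : C(X, ℝ)) (hh : ⨆ x, h x < signedInt μ h) :
    FenchelFStar A μ = ⊤ := by
  have hbh : BddAbove (range h) := (isCompact_range h.continuous).bddAbove
  rw [EReal.eq_top_iff_forall_lt]
  intro y
  obtain ⟨n, hn⟩ := exists_nat_gt ((y + ⨆ x, A x) / (signedInt μ h - ⨆ x, h x))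
  rw [div_lt_iff₀ (sub_pos.mpr hh)] at hn
  have hsup : ⨆ x, (A x + n * h x) ≤ (⨆ x, A x) + n * ⨆ x, h x :=
    ciSup_le fun x => add_le_add (le_ciSup hA x)
      (mul_le_mul_of_nonneg_left (le_ciSup hbh x) n.cast_nonneg)
  refine lt_iSup_iff.mpr ⟨⟨fun x => n * h x, by fun_prop⟩, EReal.coe_lt_coe_iff.mpr ?_⟩
  rw [ContinuousMap.coe_mk, signedInt_const_mul]
  linarith

lemma exists_iSup_lt_signedInt_of_not_isProbSigned [TopologicalSpace.PseudoMetrizableSpace X]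
    [BorelSpace X] [Nonempty X] (hμ : ¬IsProbSigned μ) :
    ∃ h : C(X, ℝ), ⨆ x, h x < signedInt μ h := by
  by_cases hpos : ∀ s, MeasurableSet s → 0 ≤ μ s
  · rcases Ne.lt_or_gt (fun h => hμ ⟨hpos, h⟩ : μ univ ≠ 1) with hlt | hgt
    · refine ⟨⟨fun _ => -1, continuous_const⟩, ?_⟩
      rw [ContinuousMap.coe_mk, signedInt_const, ciSup_const]
      linarith
    · refine ⟨⟨fun _ => 1, continuous_const⟩, ?_⟩
      rw [ContinuousMap.coe_mk, signedInt_const, ciSup_const]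
      linarith
  · push Not at hpos
    obtain ⟨s, hs, hμs⟩ := hpos
    rw [μ.apply_eq_posPart_real_sub_negPart_real hs] at hμs
    obtain ⟨f, hf01, hf⟩ := exists_continuous_integral_sub_integral_lt
      μ.toJordanDecomposition.posPart μ.toJordanDecomposition.negPart hs (neg_pos.mpr hμs)
    refine ⟨⟨fun x => -f x, by fun_prop⟩, ?_⟩
    have hsup : ⨆ x, -f x ≤ 0 := ciSup_le fun x => neg_nonpos.mpr (hf01 x).1
    rw [ContinuousMap.coe_mk, signedInt_neg, signedInt]
    linarith

end Fenchel

/-- `F*(μ̂) = −∫ A dμ̂` when `μ̂` is a probability measure, and `F*(μ̂) = +∞`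
when `μ̂` is a signed measure that is not a probability measure. -/
theorem fenchel_transform_eval
    {X : Type*} [MetricSpace X] [CompactSpace X] [Nonempty X]
    [MeasurableSpace X] [BorelSpace X]
    (A : X → ℝ) (hA : Continuous A) (μ : MeasureTheory.SignedMeasure X) :
    (IsProbSigned μ → FenchelFStar A μ = ((-(signedInt μ A) : ℝ) : EReal)) ∧
    (¬ IsProbSigned μ → FenchelFStar A μ = ⊤) := by
  refine ⟨fenchelFStar_eq_neg_signedInt A μ hA, fun hμ => ?_⟩
  obtain ⟨h, hh⟩ := exists_iSup_lt_signedInt_of_not_isProbSigned μ hμ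
  exact fenchelFStar_eq_top_of_iSup_lt_signedInt A μ (isCompact_range hA).bddAbove h hh
end

section
/- The maximal sub-action u_A dominates every other nonpositive sub-action: if (Σ,σ) is topologically mixing, A is θ-Hölder, and u ∈ C⁰(Σ, ℝ⁻) satisfies u(x) ≤ u(τ_y(x)) − A(y,x) + β_A for all (y,x) ∈ Σ̂, then u ≤ u_A, where u_A(x) = inf over finite chains starting at x of −Σ_{j} (A−β_A)(yʲ,xʲ). -/
open MeasureTheory

/-- the maximal sub-action `u_A` dominates every nonpositive sub-action. -/
theorem maximal_subaction_dominates
    {r : ℕ} {M : Fin r → Fin r → Bool}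
    (hmix : MixingShift r M)
    (lam θ C : ℝ) (hlam0 : 0 < lam) (hlam1 : lam < 1) (hθ : 0 < θ) (hC : 0 ≤ C)
    (A : NatExt r M → ℝ) (hA : HolderOnExt lam θ C A)
    (u : SigSp r M → ℝ) (hu : SubAction A u) (hneg : ∀ x, u x ≤ 0) :
    ∀ x, u x ≤ uMax (fun p => A p - betaA A) x := by
  intro x
  have hub : ∀ v ∈ {v : ℝ | ∃ k p, IsChainFrom x k p ∧
      v = -∑ j ∈ Finset.range k, (A (p j) - betaA A)}, u x ≤ v := by
    rintro v ⟨k, p, ⟨h0, hstep⟩, rfl⟩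
    rcases Nat.eq_zero_or_pos k with hk | hk
    · subst hk
      simp only [Finset.range_zero, Finset.sum_empty, neg_zero]
      exact hneg x
    · have key : ∀ m, m < k →
          u x + ∑ j ∈ Finset.range (m + 1), (A (p j) - betaA A) ≤ u (tau (p m)) := by
        intro m
        induction m with
        | zero =>
          intro _
          have h2 := hu.2 (p 0)
          rw [h0 hk] at h2
          simp only [zero_add, Finset.sum_range_one]
          linarith
        | succ n ih =>
          intro hm
          have hn : n < k := Nat.lt_of_succ_lt hm
          have h1 := ih hn
          have h2 := hu.2 (p (n + 1))
          rw [hstep n hm] at h2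
          rw [Finset.sum_range_succ]
          linarith
      have h3 := key (k - 1) (Nat.sub_lt hk one_pos)
      have hk1 : k - 1 + 1 = k := by omega
      rw [hk1] at h3
      have h4 := hneg (tau (p (k - 1)))
      linarith
  unfold uMax
  by_cases hne : {v : ℝ | ∃ k p, IsChainFrom x k p ∧
      v = -∑ j ∈ Finset.range k, (A (p j) - betaA A)}.Nonempty
  · exact le_csInf hne hub
  · rw [Set.not_nonempty_iff_eq_empty.mp hne, Real.sInf_empty]
    exact hneg x
end

section
/- For 0 < ρ < 1, the operator L_ρ on C⁰(Σ) defined by L_ρ(f)(x) = ρ · min_{y ∈ Σ*_x} [f(τ_y(x)) − A(y,x)] is a ρ-Lipschitz contraction in the sup norm, and its unique fixed points u_ρ form a uniformly θ-Hölder family: |u_ρ(x) − u_ρ(x̄)| ≤ (ρ Höld_θ(A)/(1 − ρλ^θ)) d(x,x̄)^θ whenever d(x,x̄) ≤ λ. -/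
open MeasureTheory

section Aux

variable {r : ℕ} {M : Fin r → Fin r → Bool}

@[simp] lemma prepend_zero (a : Fin r) (x : ℕ → Fin r) : prepend a x 0 = a := rfl
@[simp] lemma prepend_succ (a : Fin r) (x : ℕ → Fin r) (m : ℕ) : prepend a x (m+1) = x m := rfl

instance SigSp.compactSpace : CompactSpace (SigSp r M) := by
  have hc : ∀ j : ℕ, Continuous (fun x : ℕ → Fin r => M (x j) (x (j+1))) := by
    intro j
    have h1 : Continuous (fun q : Fin r × Fin r => M q.1 q.2) :=
      continuous_of_discreteTopology
    have h2 : Continuous (fun x : ℕ → Fin r => ((x j, x (j+1)) : Fin r × Fin r)) :=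
      (continuous_apply j).prodMk (continuous_apply (j+1))
    exact h1.comp h2
  have hcl : IsClosed {x : ℕ → Fin r | ∀ j, M (x j) (x (j+1)) = true} := by
    have he : {x : ℕ → Fin r | ∀ j, M (x j) (x (j+1)) = true}
        = ⋂ j, {x : ℕ → Fin r | M (x j) (x (j+1)) = true} := by
      ext x; simp
    rw [he]
    exact isClosed_iInter fun j => (isClosed_singleton (x := true)).preimage (hc j)
  exact isCompact_iff_compactSpace.mp hcl.isCompact

lemma dS_nonneg {lam : ℝ} (hlam0 : 0 < lam) (x x' : SigSp r M) : 0 ≤ dS lam x x' := by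
  unfold dS; split_ifs <;> positivity

lemma dS_le_one {lam : ℝ} (hlam0 : 0 ≤ lam) (hlam1 : lam ≤ 1) (x x' : SigSp r M) :
    dS lam x x' ≤ 1 := by
  unfold dS; split_ifs
  · norm_num
  · exact pow_le_one₀ hlam0 hlam1

lemma dS_head {lam : ℝ} (hlam1 : lam < 1) {x x' : SigSp r M} (h : dS lam x x' ≤ lam) :
    x.1 0 = x'.1 0 := by
  unfold dS at h
  split_ifs at h with he
  · exact congrFun he 0
  · by_contra h0
    have h1 : Nat.find (Function.ne_iff.mp he) = 0 :=
      Nat.eq_zero_of_le_zero (Nat.find_le h0)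
    rw [h1, pow_zero] at h
    linarith

lemma dS_le_pow {lam : ℝ} (hlam0 : 0 < lam) (hlam1 : lam < 1) {x x' : SigSp r M} {n : ℕ}
    (h : ∀ j ≤ n, x.1 j = x'.1 j) : dS lam x x' ≤ lam ^ (n+1) := by
  unfold dS
  split_ifs with he
  · positivity
  · apply pow_le_pow_of_le_one hlam0.le hlam1.le
    rw [Nat.le_find_iff]
    intro m hm
    simpa using h m (by omega)

lemma dS_tau {lam : ℝ} {p q : NatExt r M} {x x' : SigSp r M}
    (hpq : p.1.1 = q.1.1) (hp : p.1.2 = x) (hq : q.1.2 = x') :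
    dS lam (tau p) (tau q) = lam * dS lam x x' := by
  have h1 : (tau p).1 = prepend (p.1.1.1 0) x.1 := by rw [← hp]; rfl
  have h2 : (tau q).1 = prepend (p.1.1.1 0) x'.1 := by rw [hpq, ← hq]; rfl
  unfold dS
  by_cases h : x.1 = x'.1
  · rw [dif_pos h, dif_pos (by rw [h1, h2, h]), mul_zero]
  · have hne : (tau p).1 ≠ (tau q).1 := by
      rw [h1, h2]
      intro hcontra
      apply h
      funext j
      exact congrFun hcontra (j+1)
    rw [dif_neg h, dif_neg hne]
    have hfind : Nat.find (Function.ne_iff.mp hne)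
        = Nat.find (Function.ne_iff.mp h) + 1 := by
      rw [Nat.find_eq_iff]
      constructor
      · simp only [h1, h2, prepend_succ]
        exact Nat.find_spec (Function.ne_iff.mp h)
      · intro m hm
        match m with
        | 0 => simp [h1, h2]
        | j+1 =>
          have hj := Nat.find_min (Function.ne_iff.mp h) (show j < _ by omega)
          simp only [h1, h2, prepend_succ, ne_eq, not_not] at hj ⊢
          exact hj
    rw [hfind, pow_succ]
    ring

lemma dHat_eq {lam : ℝ} (hlam0 : 0 < lam) {p q : NatExt r M} {x x' : SigSp r M}
    (hpq : p.1.1 = q.1.1) (hp : p.1.2 = x) (hq : q.1.2 = x') :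
    dHat lam p q = dS lam x x' := by
  unfold dHat
  rw [hpq, hp, hq]
  have h0 : dDual lam q.1.1 q.1.1 = 0 := by unfold dDual; rw [dif_pos rfl]
  rw [h0, max_eq_right (dS_nonneg hlam0 _ _)]

lemma abs_sub_le_abs_add_abs (a b : ℝ) : |a - b| ≤ |a| + |b| := by
  simpa [sub_eq_add_neg, abs_neg] using abs_add_le a (-b)

lemma abs_sInf_sub_sInf_le {S T : Set ℝ} (δ : ℝ) (hδ : 0 ≤ δ)
    (h1 : ∀ s ∈ S, ∃ t ∈ T, |s - t| ≤ δ)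
    (h2 : ∀ t ∈ T, ∃ s ∈ S, |s - t| ≤ δ) :
    |sInf S - sInf T| ≤ δ := by
  rcases Set.eq_empty_or_nonempty S with hSe | hSne
  · have hTe : T = ∅ := by
      rw [Set.eq_empty_iff_forall_notMem]
      intro t ht
      obtain ⟨s, hs, -⟩ := h2 t ht
      rw [hSe] at hs
      exact hs
    simp [hSe, hTe, Real.sInf_empty, hδ]
  · have hTne : T.Nonempty := by
      obtain ⟨s, hs⟩ := hSne
      obtain ⟨t, ht, -⟩ := h1 s hs
      exact ⟨t, ht⟩
    by_cases hSb : BddBelow S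
    · have hTb : BddBelow T := by
        obtain ⟨b, hb⟩ := hSb
        refine ⟨b - δ, fun t ht => ?_⟩
        obtain ⟨s, hs, hst⟩ := h2 t ht
        have h3 := hb hs
        have h4 := (abs_le.mp hst).2
        linarith
      have hAineq : sInf S - δ ≤ sInf T := by
        apply le_csInf hTne
        intro t ht
        obtain ⟨s, hs, hst⟩ := h2 t ht
        have h3 := csInf_le hSb hs
        have h4 := (abs_le.mp hst).2
        linarith
      have hBineq : sInf T - δ ≤ sInf S := by
        apply le_csInf hSne
        intro s hs
        obtain ⟨t, ht, hst⟩ := h1 s hs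
        have h3 := csInf_le hTb ht
        have h4 := (abs_le.mp hst).1
        linarith
      rw [abs_le]
      constructor <;> linarith
    · have hTb : ¬ BddBelow T := by
        intro hTb
        apply hSb
        obtain ⟨b, hb⟩ := hTb
        refine ⟨b - δ, fun s hs => ?_⟩
        obtain ⟨t, ht, hst⟩ := h1 s hs
        have h3 := hb ht
        have h4 := (abs_le.mp hst).1
        linarith
      rw [Real.sInf_of_not_bddBelow hSb, Real.sInf_of_not_bddBelow hTb]
      simpa using hδ

lemma Lrho_sub_le (A : NatExt r M → ℝ) (rho : ℝ) (hrho : 0 ≤ rho)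
    (f g : SigSp r M → ℝ) (x x' : SigSp r M) (h0 : x.1 0 = x'.1 0)
    (δ : ℝ) (hδ : 0 ≤ δ)
    (hfg : ∀ p q : NatExt r M, p.1.1 = q.1.1 → p.1.2 = x → q.1.2 = x' →
      |(f (tau p) - A p) - (g (tau q) - A q)| ≤ δ) :
    |Lrho A rho f x - Lrho A rho g x'| ≤ rho * δ := by
  have h1 : ∀ s ∈ {v : ℝ | ∃ p : NatExt r M, proj1 p = x ∧ v = f (tau p) - A p},
      ∃ t ∈ {v : ℝ | ∃ p : NatExt r M, proj1 p = x' ∧ v = g (tau p) - A p}, |s - t| ≤ δ := by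
    rintro s ⟨p, hp, rfl⟩
    have hp' : p.1.2 = x := hp
    have hm : M (p.1.1.1 0) (x'.1 0) = true := by
      have h2 := p.2
      rw [show p.1.2.1 = x.1 from congrArg Subtype.val hp', h0] at h2
      exact h2
    refine ⟨g (tau ⟨(p.1.1, x'), hm⟩) - A ⟨(p.1.1, x'), hm⟩, ⟨⟨(p.1.1, x'), hm⟩, rfl, rfl⟩, ?_⟩
    exact hfg p ⟨(p.1.1, x'), hm⟩ rfl hp' rfl
  have h2 : ∀ t ∈ {v : ℝ | ∃ p : NatExt r M, proj1 p = x' ∧ v = g (tau p) - A p},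
      ∃ s ∈ {v : ℝ | ∃ p : NatExt r M, proj1 p = x ∧ v = f (tau p) - A p}, |s - t| ≤ δ := by
    rintro t ⟨q, hq, rfl⟩
    have hq' : q.1.2 = x' := hq
    have hm : M (q.1.1.1 0) (x.1 0) = true := by
      have h2 := q.2
      rw [show q.1.2.1 = x'.1 from congrArg Subtype.val hq', ← h0] at h2
      exact h2
    refine ⟨f (tau ⟨(q.1.1, x), hm⟩) - A ⟨(q.1.1, x), hm⟩, ⟨⟨(q.1.1, x), hm⟩, rfl, rfl⟩, ?_⟩
    exact hfg ⟨(q.1.1, x), hm⟩ q rfl rfl hq'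
  have key := abs_sInf_sub_sInf_le δ hδ h1 h2
  have e1 : Lrho A rho f x
      = rho * sInf {v : ℝ | ∃ p : NatExt r M, proj1 p = x ∧ v = f (tau p) - A p} := rfl
  have e2 : Lrho A rho g x'
      = rho * sInf {v : ℝ | ∃ p : NatExt r M, proj1 p = x' ∧ v = g (tau p) - A p} := rfl
  rw [e1, e2, ← mul_sub, abs_mul, abs_of_nonneg hrho]
  exact mul_le_mul_of_nonneg_left key hrho

lemma Lrho_holder {lam θ C : ℝ} (hlam0 : 0 < lam) (hlam1 : lam < 1) (hθ : 0 < θ) (hC : 0 ≤ C)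
    {A : NatExt r M → ℝ} (hA : HolderOnExt lam θ C A)
    {rho : ℝ} (hrho : 0 ≤ rho) {c : ℝ} (hc : 0 ≤ c)
    {f : SigSp r M → ℝ}
    (hf : ∀ x x', dS lam x x' ≤ lam → |f x - f x'| ≤ c * dS lam x x' ^ θ)
    (x x' : SigSp r M) (h : dS lam x x' ≤ lam) :
    |Lrho A rho f x - Lrho A rho f x'| ≤ rho * (c * lam ^ θ + C) * dS lam x x' ^ θ := by
  have h0 := dS_head hlam1 h
  have hd0 : 0 ≤ dS lam x x' := dS_nonneg hlam0 _ _
  have hδ0 : 0 ≤ (c * lam ^ θ + C) * dS lam x x' ^ θ := by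
    apply mul_nonneg _ (Real.rpow_nonneg hd0 θ)
    have := Real.rpow_nonneg hlam0.le θ
    nlinarith
  have happ := Lrho_sub_le A rho hrho f f x x' h0 ((c * lam ^ θ + C) * dS lam x x' ^ θ) hδ0 ?_
  · calc |Lrho A rho f x - Lrho A rho f x'|
        ≤ rho * ((c * lam ^ θ + C) * dS lam x x' ^ θ) := happ
      _ = rho * (c * lam ^ θ + C) * dS lam x x' ^ θ := by ring
  · intro p q hpq hp hq
    have hdτ : dS lam (tau p) (tau q) = lam * dS lam x x' := dS_tau hpq hp hq
    have hdle : dS lam (tau p) (tau q) ≤ lam := by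
      rw [hdτ]
      exact mul_le_of_le_one_right hlam0.le (dS_le_one hlam0.le hlam1.le _ _)
    have hh1 : |f (tau p) - f (tau q)| ≤ c * (lam * dS lam x x') ^ θ := by
      have := hf _ _ hdle
      rwa [hdτ] at this
    have hh2 : |A p - A q| ≤ C * dS lam x x' ^ θ := by
      have := hA p q
      rwa [dHat_eq hlam0 hpq hp hq] at this
    have e : (f (tau p) - A p) - (f (tau q) - A q)
        = (f (tau p) - f (tau q)) - (A p - A q) := by ring
    rw [e]
    calc |(f (tau p) - f (tau q)) - (A p - A q)|
        ≤ |f (tau p) - f (tau q)| + |A p - A q| := abs_sub_le_abs_add_abs _ _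
      _ ≤ c * (lam * dS lam x x') ^ θ + C * dS lam x x' ^ θ := add_le_add hh1 hh2
      _ = (c * lam ^ θ + C) * dS lam x x' ^ θ := by
          rw [Real.mul_rpow hlam0.le hd0]; ring

lemma continuous_of_holdS {lam θ c : ℝ} (hlam0 : 0 < lam) (hlam1 : lam < 1) (hθ : 0 < θ)
    (hc : 0 ≤ c) {f : SigSp r M → ℝ}
    (hf : ∀ x x', dS lam x x' ≤ lam → |f x - f x'| ≤ c * dS lam x x' ^ θ) :
    Continuous f := by
  rw [continuous_iff_continuousAt]
  intro x
  rw [ContinuousAt, Metric.tendsto_nhds]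
  intro ε hε
  have hl1 : lam ^ θ < 1 := Real.rpow_lt_one hlam0.le hlam1 hθ
  have hl0 : 0 ≤ lam ^ θ := Real.rpow_nonneg hlam0.le θ
  obtain ⟨n, hn⟩ := exists_pow_lt_of_lt_one (show (0:ℝ) < ε / (c + 1) by positivity) hl1
  have hn' : c * (lam ^ θ) ^ (n + 1) < ε := by
    have hp1 : (lam ^ θ) ^ (n + 1) ≤ (lam ^ θ) ^ n :=
      pow_le_pow_of_le_one hl0 hl1.le (by omega)
    have hp0 : (0:ℝ) ≤ (lam ^ θ) ^ n := pow_nonneg hl0 n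
    have h2 : c * (lam ^ θ) ^ (n+1) ≤ (c + 1) * (lam ^ θ) ^ n := by nlinarith
    have h3 : (c + 1) * (lam ^ θ) ^ n < (c + 1) * (ε / (c + 1)) := by
      apply mul_lt_mul_of_pos_left hn (by linarith)
    have h4 : (c + 1) * (ε / (c + 1)) = ε := by field_simp
    linarith
  have hUopen : IsOpen {x' : SigSp r M | ∀ j ≤ n, x'.1 j = x.1 j} := by
    have he : {x' : SigSp r M | ∀ j ≤ n, x'.1 j = x.1 j}
        = ⋂ j ∈ Set.Iic n, {x' : SigSp r M | x'.1 j = x.1 j} := by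
      ext y; simp [Set.mem_iInter]
    rw [he]
    apply (Set.finite_Iic n).isOpen_biInter
    intro j _
    have hcv : Continuous (fun x' : SigSp r M => x'.1) := continuous_subtype_val
    exact (isOpen_discrete ({x.1 j} : Set (Fin r))).preimage ((continuous_apply j).comp hcv)
  have hxU : x ∈ {x' : SigSp r M | ∀ j ≤ n, x'.1 j = x.1 j} := fun j _ => rfl
  filter_upwards [hUopen.mem_nhds hxU] with x' hx'
  rw [Real.dist_eq]
  have hd : dS lam x' x ≤ lam ^ (n+1) := dS_le_pow hlam0 hlam1 (fun j hj => hx' j hj)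
  have hder : dS lam x' x ≤ lam := by
    calc dS lam x' x ≤ lam ^ (n+1) := hd
      _ ≤ lam ^ 1 := pow_le_pow_of_le_one hlam0.le hlam1.le (by omega)
      _ = lam := pow_one lam
  have hcast : ((lam ^ (n+1) : ℝ)) ^ θ = (lam ^ θ) ^ (n+1) := by
    rw [← Real.rpow_natCast lam (n+1), ← Real.rpow_natCast (lam ^ θ) (n+1),
      ← Real.rpow_mul hlam0.le, ← Real.rpow_mul hlam0.le, mul_comm]
  calc |f x' - f x| ≤ c * dS lam x' x ^ θ := hf _ _ hder
    _ ≤ c * ((lam ^ (n+1) : ℝ)) ^ θ := by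
        apply mul_le_mul_of_nonneg_left _ hc
        exact Real.rpow_le_rpow (dS_nonneg hlam0 _ _) hd hθ.le
    _ = c * (lam ^ θ) ^ (n+1) := by rw [hcast]
    _ < ε := hn'

end Aux

/-- `L_ρ` is a `ρ`-Lipschitz contraction in the sup norm, it has a unique
continuous fixed point `u_ρ`, and the fixed points form a uniformly `θ`-Hölder family:
`|u_ρ(x) − u_ρ(x̄)| ≤ (ρ Höld_θ(A)/(1 − ρλ^θ)) d(x,x̄)^θ` whenever `d(x,x̄) ≤ λ`. -/
theorem Lrho_contraction_and_fixed_points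
    {r : ℕ} {M : Fin r → Fin r → Bool}
    (lam θ C : ℝ) (hlam0 : 0 < lam) (hlam1 : lam < 1) (hθ : 0 < θ) (hC : 0 ≤ C)
    (A : NatExt r M → ℝ) (hA : HolderOnExt lam θ C A)
    (rho : ℝ) (hrho0 : 0 < rho) (hrho1 : rho < 1) :
    (∀ f g : SigSp r M → ℝ, ∀ c : ℝ, (∀ x, |f x - g x| ≤ c) →
        ∀ x, |Lrho A rho f x - Lrho A rho g x| ≤ rho * c) ∧
    (∃! u : C(SigSp r M, ℝ), ∀ x, Lrho A rho (⇑u) x = u x) ∧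
    (∀ u : SigSp r M → ℝ, Continuous u → (∀ x, Lrho A rho u x = u x) →
        ∀ x x', dS lam x x' ≤ lam →
          |u x - u x'| ≤ (rho * C / (1 - rho * lam ^ θ)) * (dS lam x x') ^ θ) := by
  -- Part 1: contraction
  have part1 : ∀ f g : SigSp r M → ℝ, ∀ c : ℝ, (∀ x, |f x - g x| ≤ c) →
      ∀ x, |Lrho A rho f x - Lrho A rho g x| ≤ rho * c := by
    intro f g c hc x
    have hc0 : 0 ≤ c := le_trans (abs_nonneg _) (hc x)
    apply Lrho_sub_le A rho hrho0.le f g x x rfl c hc0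
    intro p q hpq hp hq
    have hpq' : p = q := Subtype.ext (Prod.ext hpq (hp.trans hq.symm))
    subst hpq'
    have e : (f (tau p) - A p) - (g (tau p) - A p) = f (tau p) - g (tau p) := by ring
    rw [e]
    exact hc _
  -- the Hölder constant
  set K := rho * C / (1 - rho * lam ^ θ) with hKdef
  have hlθ1 : lam ^ θ < 1 := Real.rpow_lt_one hlam0.le hlam1 hθ
  have hlθ0 : 0 ≤ lam ^ θ := Real.rpow_nonneg hlam0.le θ
  have hlt : rho * lam ^ θ < 1 := by nlinarith
  have hden : 0 < 1 - rho * lam ^ θ := by linarith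
  have hK0 : 0 ≤ K := div_nonneg (by positivity) hden.le
  have hKC : K * (1 - rho * lam ^ θ) = rho * C := by
    rw [hKdef]
    exact div_mul_cancel₀ _ (ne_of_gt hden)
  have hKfix : rho * (K * lam ^ θ + C) = K := by linear_combination -hKC
  have hstepK : ∀ f : SigSp r M → ℝ,
      (∀ x x', dS lam x x' ≤ lam → |f x - f x'| ≤ K * dS lam x x' ^ θ) →
      (∀ x x', dS lam x x' ≤ lam →
        |Lrho A rho f x - Lrho A rho f x'| ≤ K * dS lam x x' ^ θ) := by
    intro f hf x x' h
    have h1 := Lrho_holder hlam0 hlam1 hθ hC hA hrho0.le hK0 hf x x' h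
    rwa [hKfix] at h1
  -- Part 2: unique continuous fixed point, via Banach on the Hölder class
  have part2 : ∃! u : C(SigSp r M, ℝ), ∀ x, Lrho A rho (⇑u) x = u x := by
    set 𝒦 : Set C(SigSp r M, ℝ) :=
      {f | ∀ x x', dS lam x x' ≤ lam → |f x - f x'| ≤ K * dS lam x x' ^ θ} with h𝒦
    have hclosed : IsClosed 𝒦 := by
      have he : 𝒦 = ⋂ (x : SigSp r M) (x' : SigSp r M),
          {f : C(SigSp r M, ℝ) | dS lam x x' ≤ lam → |f x - f x'| ≤ K * dS lam x x' ^ θ} := by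
        ext f
        simp only [h𝒦, Set.mem_setOf_eq, Set.mem_iInter]
      rw [he]
      refine isClosed_iInter fun x => isClosed_iInter fun x' => ?_
      by_cases h : dS lam x x' ≤ lam
      · have he2 : {f : C(SigSp r M, ℝ) | dS lam x x' ≤ lam → |f x - f x'| ≤ K * dS lam x x' ^ θ}
            = {f : C(SigSp r M, ℝ) | |f x - f x'| ≤ K * dS lam x x' ^ θ} := by
          ext f; simp [h]
        rw [he2]
        have hcont : Continuous (fun f : C(SigSp r M, ℝ) => |f x - f x'|) :=
          ((continuous_eval_const x).sub
            (continuous_eval_const x')).abs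
        exact isClosed_le hcont continuous_const
      · have he2 : {f : C(SigSp r M, ℝ) | dS lam x x' ≤ lam → |f x - f x'| ≤ K * dS lam x x' ^ θ}
            = Set.univ := by
          ext f; simp [h]
        rw [he2]
        exact isClosed_univ
    haveI : CompleteSpace ↥𝒦 := hclosed.completeSpace_coe
    haveI : Nonempty ↥𝒦 := by
      refine ⟨⟨0, fun x x' h => ?_⟩⟩
      simp only [ContinuousMap.zero_apply, sub_zero, abs_zero]
      exact mul_nonneg hK0 (Real.rpow_nonneg (dS_nonneg hlam0 _ _) θ)
    have hmem : ∀ f : ↥𝒦, ∀ x x', dS lam x x' ≤ lam →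
        |f.1 x - f.1 x'| ≤ K * dS lam x x' ^ θ := fun f => f.2
    let T : ↥𝒦 → ↥𝒦 := fun f =>
      ⟨⟨Lrho A rho ⇑f.1, continuous_of_holdS hlam0 hlam1 hθ hK0 (hstepK ⇑f.1 (hmem f))⟩,
        hstepK ⇑f.1 (hmem f)⟩
    have hT : ContractingWith (⟨rho, hrho0.le⟩ : NNReal) T := by
      constructor
      · exact_mod_cast hrho1
      · apply LipschitzWith.of_dist_le_mul
        intro f g
        rw [Subtype.dist_eq]
        have hb : (0:ℝ) ≤ rho * dist f.1 g.1 := mul_nonneg hrho0.le dist_nonneg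
        have : dist (T f).1 (T g).1 ≤ rho * dist f.1 g.1 := by
          rw [ContinuousMap.dist_le hb]
          intro x
          rw [Real.dist_eq]
          exact part1 _ _ (dist f.1 g.1)
            (fun y => by rw [← Real.dist_eq]; exact ContinuousMap.dist_apply_le_dist y) x
        exact this
    set u₀ : ↥𝒦 := ContractingWith.fixedPoint T hT with hu₀def
    have hfix0 : T u₀ = u₀ := hT.fixedPoint_isFixedPt
    have hu : ∀ x, Lrho A rho (⇑u₀.1) x = u₀.1 x := by
      intro x
      have := congrArg (fun w : ↥𝒦 => (w.1 : SigSp r M → ℝ) x) hfix0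
      exact this
    refine ⟨u₀.1, hu, ?_⟩
    intro v hv
    have hc : ∀ y, |v y - u₀.1 y| ≤ dist v u₀.1 := fun y => by
      rw [← Real.dist_eq]; exact ContinuousMap.dist_apply_le_dist y
    have h2 : ∀ x, |v x - u₀.1 x| ≤ rho * dist v u₀.1 := by
      intro x
      rw [← hv x, ← hu x]
      exact part1 _ _ _ hc x
    have h3 : dist v u₀.1 ≤ rho * dist v u₀.1 := by
      rw [ContinuousMap.dist_le (mul_nonneg hrho0.le dist_nonneg)]
      intro x
      rw [Real.dist_eq]
      exact h2 x
    have h4 : dist v u₀.1 = 0 := by nlinarith [dist_nonneg (x := v) (y := u₀.1)]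
    exact dist_eq_zero.mp h4
  -- Part 3: uniform Hölder bound for fixed points
  refine ⟨part1, part2, ?_⟩
  intro u hu hfixu x x' hxx'
  set B := ‖(⟨u, hu⟩ : C(SigSp r M, ℝ))‖ with hBdef
  have hB : ∀ y, |u y| ≤ B := by
    intro y
    rw [hBdef, ← Real.norm_eq_abs]
    exact ContinuousMap.norm_coe_le_norm (⟨u, hu⟩ : C(SigSp r M, ℝ)) y
  have hB0 : 0 ≤ B := norm_nonneg _
  have main : ∀ k : ℕ, ∀ y y' : SigSp r M, dS lam y y' ≤ lam →
      |u y - u y'| ≤ rho ^ k * (2 * B) + K * dS lam y y' ^ θ := by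
    intro k
    induction k with
    | zero =>
      intro y y' h
      rw [pow_zero, one_mul]
      have h1 := abs_sub_le_abs_add_abs (u y) (u y')
      have h2 := hB y
      have h3 := hB y'
      have h4 : 0 ≤ K * dS lam y y' ^ θ :=
        mul_nonneg hK0 (Real.rpow_nonneg (dS_nonneg hlam0 _ _) θ)
      linarith
    | succ k ih =>
      intro y y' h
      have h0 := dS_head hlam1 h
      have hd0 : 0 ≤ dS lam y y' := dS_nonneg hlam0 _ _
      have hδ0 : 0 ≤ (rho ^ k * (2 * B) + K * (lam * dS lam y y') ^ θ) + C * dS lam y y' ^ θ := by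
        have hh1 : (0:ℝ) ≤ rho ^ k * (2 * B) := by positivity
        have hh2 : (0:ℝ) ≤ K * (lam * dS lam y y') ^ θ :=
          mul_nonneg hK0 (Real.rpow_nonneg (mul_nonneg hlam0.le hd0) θ)
        have hh3 : (0:ℝ) ≤ C * dS lam y y' ^ θ :=
          mul_nonneg hC (Real.rpow_nonneg hd0 θ)
        linarith
      rw [← hfixu y, ← hfixu y']
      have happ := Lrho_sub_le A rho hrho0.le u u y y' h0
        ((rho ^ k * (2 * B) + K * (lam * dS lam y y') ^ θ) + C * dS lam y y' ^ θ) hδ0 ?_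
      · refine le_trans happ (le_of_eq ?_)
        rw [Real.mul_rpow hlam0.le hd0]
        linear_combination (dS lam y y' ^ θ) * hKfix
      · intro p q hpq hp hq
        have hdτ : dS lam (tau p) (tau q) = lam * dS lam y y' := dS_tau hpq hp hq
        have hdle : dS lam (tau p) (tau q) ≤ lam := by
          rw [hdτ]
          exact mul_le_of_le_one_right hlam0.le (dS_le_one hlam0.le hlam1.le _ _)
        have h1 : |u (tau p) - u (tau q)| ≤ rho ^ k * (2 * B) + K * (lam * dS lam y y') ^ θ := by
          have := ih (tau p) (tau q) hdle
          rwa [hdτ] at this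
        have h2 : |A p - A q| ≤ C * dS lam y y' ^ θ := by
          have := hA p q
          rwa [dHat_eq hlam0 hpq hp hq] at this
        have e : (u (tau p) - A p) - (u (tau q) - A q)
            = (u (tau p) - u (tau q)) - (A p - A q) := by ring
        rw [e]
        exact le_trans (abs_sub_le_abs_add_abs _ _) (add_le_add h1 h2)
  have hlim : Filter.Tendsto (fun k : ℕ => rho ^ k * (2 * B) + K * dS lam x x' ^ θ)
      Filter.atTop (nhds (0 * (2 * B) + K * dS lam x x' ^ θ)) :=
    (((tendsto_pow_atTop_nhds_zero_of_lt_one hrho0.le hrho1).mul_const (2 * B)).add_const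
      (K * dS lam x x' ^ θ))
  have hfin := ge_of_tendsto' hlim (fun k => main k x x' hxx')
  simpa using hfin
end

section
/- If u ∈ C⁰(Σ) is a sub-action for a continuous potential A on Σ̂, then S_A(x,x̄) ≥ u(x̄) − u(x) for all x, x̄ ∈ Σ; moreover equality holds if and only if x is u-connected to x̄. -/
open MeasureTheory

section Helpers

variable {r : ℕ} {M : Fin r → Fin r → Bool}

private lemma cylinder_subset_open {U : Set (SigSp r M)} (hU : IsOpen U)
    {x : SigSp r M} (hx : x ∈ U) :
    ∃ n : ℕ, ∀ z : SigSp r M, (∀ j < n, z.1 j = x.1 j) → z ∈ U := by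
  obtain ⟨V, hV, rfl⟩ := isOpen_induced_iff.mp hU
  obtain ⟨I, t, ht, hsub⟩ := isOpen_pi_iff.mp hV x.1 hx
  refine ⟨I.sup id + 1, fun z hz => ?_⟩
  apply hsub
  intro i hi
  have hzi : z.1 i = x.1 i := hz i (Nat.lt_succ_of_le (Finset.le_sup (f := id) hi))
  rw [hzi]
  exact (ht i hi).2

private lemma dS_small_agree {lam : ℝ} (hlam0 : 0 < lam) (hlam1 : lam < 1)
    {z x : SigSp r M} {n : ℕ} (h : dS lam z x < lam ^ n) :
    ∀ j < n, z.1 j = x.1 j := by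
  intro j hj
  classical
  unfold dS at h
  split_ifs at h with heq
  · exact congrFun heq j
  · have hn : n < Nat.find (show ∃ j, z.1 j ≠ x.1 j from Function.ne_iff.mp heq) :=
      (pow_lt_pow_iff_right_of_lt_one₀ hlam0 hlam1).mp h
    by_contra hne
    exact Nat.find_min _ (hj.trans hn) hne

private lemma cont_mod {lam : ℝ} (hlam0 : 0 < lam) (hlam1 : lam < 1)
    {u : SigSp r M → ℝ} (hu : Continuous u) (x : SigSp r M) {δ : ℝ} (hδ : 0 < δ) :
    ∃ ε > 0, ∀ z, dS lam z x < ε → |u z - u x| < δ := by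
  have hU : IsOpen (u ⁻¹' Metric.ball (u x) δ) :=
    (Metric.isOpen_ball).preimage hu
  have hxU : x ∈ u ⁻¹' Metric.ball (u x) δ := by
    simp [Metric.mem_ball, hδ]
  obtain ⟨n, hn⟩ := cylinder_subset_open hU hxU
  refine ⟨lam ^ n, pow_pos hlam0 n, fun z hz => ?_⟩
  have := hn z (dS_small_agree hlam0 hlam1 hz)
  simpa [Metric.mem_ball, Real.dist_eq] using this

private lemma chain_sum_le {A : NatExt r M → ℝ} {u : SigSp r M → ℝ}
    (hu : SubAction A u) (p : ℕ → NatExt r M) :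
    ∀ k : ℕ, 1 ≤ k → (∀ j, j + 1 < k → proj1 (p (j + 1)) = tau (p j)) →
      ∑ j ∈ Finset.range k, (A (p j) - betaA A) ≤ u (tau (p (k - 1))) - u (proj1 (p 0)) := by
  intro k
  induction k with
  | zero => intro h; omega
  | succ k ih =>
    intro _ hch
    rcases Nat.eq_zero_or_pos k with hk0 | hk1
    · subst hk0
      simpa using (by linarith [hu.2 (p 0)] : A (p 0) - betaA A ≤ u (tau (p 0)) - u (proj1 (p 0)))
    · have hsum := ih hk1 (fun j hj => hch j (hj.trans (Nat.lt_succ_self k)))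
      rw [Finset.sum_range_succ]
      have hlink : proj1 (p k) = tau (p (k - 1)) := by
        have := hch (k - 1) (by omega)
        rwa [Nat.sub_add_cancel hk1] at this
      have hsub := hu.2 (p k)
      rw [hlink] at hsub
      simpa using (by linarith : ∑ j ∈ Finset.range k, (A (p j) - betaA A)
        + (A (p k) - betaA A) ≤ u (tau (p k)) - u (proj1 (p 0)))

end Helpers

/-- `S_A(x,x̄) ≥ u(x̄) − u(x)` for every sub-action `u`, with equality
precisely when `x` is `u`-connected to `x̄`. -/
theorem mane_ge_subaction
    {r : ℕ} {M : Fin r → Fin r → Bool}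
    (lam : ℝ) (hlam0 : 0 < lam) (hlam1 : lam < 1)
    (A : NatExt r M → ℝ) (hA : Continuous A)
    (u : SigSp r M → ℝ) (hu : SubAction A u)
    (x xbar : SigSp r M) :
    (((u xbar - u x : ℝ) : EReal) ≤ ManePot lam A x xbar) ∧
    (ManePot lam A x xbar = ((u xbar - u x : ℝ) : EReal) ↔ UConnected lam A u x xbar) := by
  set c : ℝ := u xbar - u x with hc
  -- the key lower bound on each SAeps
  have key : ∀ δ : ℝ, 0 < δ → ∀ ε > 0,
      (∀ z, dS lam z x < ε → |u z - u x| < δ) →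
      ((c - δ : ℝ) : EReal) ≤ SAeps lam A ε x xbar := by
    intro δ hδ ε hε hmod
    apply le_sInf
    rintro v ⟨k, p, ⟨hk, h0, hch, hd⟩, rfl⟩
    rw [EReal.coe_le_coe_iff]
    have hsum := chain_sum_le hu p k hk hch
    rw [h0] at hsum
    have habs := abs_lt.mp (hmod _ hd)
    simp only [hc]
    linarith [habs.1, habs.2]
  have part1 : ((c : ℝ) : EReal) ≤ ManePot lam A x xbar := by
    by_contra hcon
    push_neg at hcon
    obtain ⟨d, hd1, hd2⟩ := EReal.lt_iff_exists_real_btwn.mp hcon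
    have hδ : (0 : ℝ) < c - d := by
      have := EReal.coe_lt_coe_iff.mp hd2; linarith
    obtain ⟨ε, hε, hmod⟩ := cont_mod hlam0 hlam1 hu.1 x hδ
    have hle : ((c - (c - d) : ℝ) : EReal) ≤ ManePot lam A x xbar :=
      le_trans (key _ hδ ε hε hmod)
        (le_iSup₂ (f := fun ε (_ : (0:ℝ) < ε) => SAeps lam A ε x xbar) ε hε)
    have : ((d : ℝ) : EReal) ≤ ManePot lam A x xbar := by
      convert hle using 2; ring
    exact absurd hd1 (not_lt.mpr this)
  refine ⟨part1, ?_, ?_⟩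
  · -- equality → u-connected
    intro heq ε hε
    have hε2 : (0 : ℝ) < ε / 2 := by linarith
    obtain ⟨ε₀, hε₀, hmod⟩ := cont_mod hlam0 hlam1 hu.1 x hε2
    set ε₁ : ℝ := min ε ε₀ with hε₁def
    have hε₁ : 0 < ε₁ := lt_min hε hε₀
    have hSle : SAeps lam A ε₁ x xbar ≤ ((c : ℝ) : EReal) := by
      rw [← heq]
      exact le_iSup₂ (f := fun ε (_ : (0:ℝ) < ε) => SAeps lam A ε x xbar) ε₁ hε₁
    have hSlt : SAeps lam A ε₁ x xbar < ((c + ε / 2 : ℝ) : EReal) :=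
      lt_of_le_of_lt hSle (EReal.coe_lt_coe_iff.mpr (by linarith))
    obtain ⟨v, hv, hvlt⟩ := sInf_lt_iff.mp hSlt
    obtain ⟨k, p, ⟨hk, h0, hch, hd⟩, rfl⟩ := hv
    have hvlt' : -∑ j ∈ Finset.range k, (A (p j) - betaA A) < c + ε / 2 :=
      EReal.coe_lt_coe_iff.mp hvlt
    have hsum := chain_sum_le hu p k hk hch
    rw [h0] at hsum
    have hd0 : dS lam (tau (p (k - 1))) x < ε₀ := lt_of_lt_of_le hd (min_le_right _ _)
    have habs := abs_lt.mp (hmod _ hd0)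
    refine ⟨k, p, ⟨hk, h0, hch, lt_of_lt_of_le hd (min_le_left _ _)⟩, ?_⟩
    rw [abs_lt]
    constructor
    · linarith [hvlt', hc]
    · linarith [hsum, habs.2, hc]
  · -- u-connected → equality
    intro hcon
    refine le_antisymm ?_ part1
    apply iSup₂_le
    intro ε hε
    by_contra hlt
    push_neg at hlt
    obtain ⟨d, hd1, hd2⟩ := EReal.lt_iff_exists_real_btwn.mp hlt
    have hδ : (0 : ℝ) < d - c := by
      have := EReal.coe_lt_coe_iff.mp hd1; linarith
    set δ' : ℝ := min ε (d - c) with hδ'def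
    have hδ' : 0 < δ' := lt_min hε hδ
    obtain ⟨k, p, ⟨hk, h0, hch, hd'⟩, hclose⟩ := hcon δ' hδ'
    have hmem : ((- ∑ j ∈ Finset.range k, (A (p j) - betaA A) : ℝ) : EReal) ∈
        {v : EReal | ∃ k p, InPath lam ε x xbar k p ∧
          v = ((- ∑ j ∈ Finset.range k, (A (p j) - betaA A) : ℝ) : EReal)} :=
      ⟨k, p, ⟨hk, h0, hch, lt_of_lt_of_le hd' (min_le_left _ _)⟩, rfl⟩
    have hSle := sInf_le hmem
    have habs := abs_lt.mp hclose
    have hbd : -∑ j ∈ Finset.range k, (A (p j) - betaA A) < d := by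
      have h1 : δ' ≤ d - c := min_le_right _ _
      linarith [habs.1, hc]
    have : SAeps lam A ε x xbar < ((d : ℝ) : EReal) :=
      lt_of_le_of_lt hSle (EReal.coe_lt_coe_iff.mpr hbd)
    exact absurd hd2 (not_lt.mpr this.le)
end

section
/- If u ∈ C⁰(Σ) is a sub-action for a continuous potential A, then a holonomic probability μ̂ is A-maximizing if and only if its support is contained in the contact locus M_A(u) = {(y,x) ∈ Σ̂ : A(y,x) + u(x) − u(τ_y(x)) = β_A}. -/
open MeasureTheory

/-!
Because `u` is a sub-action, the gap `g = β_A - (A + u ∘ π₁ - u ∘ τ)` is continuous and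
nonnegative, and holonomy makes the coboundary `u ∘ π₁ - u ∘ τ` integrate to zero, so
`∫ g dμ = β_A - ∫ A dμ`. A continuous nonnegative function has zero integral iff it vanishes on
the support: its zero set is closed, and in a second countable space the support is the
smallest closed conull set.
-/

instance {α : Type*} [TopologicalSpace α] [SecondCountableTopology α] (p : α → Prop) :
    SecondCountableTopology (Subtype p) :=
  Topology.IsEmbedding.subtypeVal.secondCountableTopology

@[fun_prop]
theorem Continuous.subtype_val_apply {α ι : Type*} {X : ι → Type*} [TopologicalSpace α]
    [∀ i, TopologicalSpace (X i)] {p : (∀ i, X i) → Prop} {f : α → Subtype p}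
    (hf : Continuous f) (i : ι) : Continuous fun a => (f a).1 i :=
  (continuous_apply i).comp (continuous_subtype_val.comp hf)

section ShiftSpaces

variable {r : ℕ} {M : Fin r → Fin r → Bool}

instance : CompactSpace (SigSp r M) :=
  isCompact_iff_compactSpace.mp <| IsClosed.isCompact
    (s := {x : ℕ → Fin r | ∀ j, M (x j) (x (j + 1)) = true}) <| by
    simp only [Set.ofPred_forall]
    exact isClosed_iInter fun j => isClosed_eq (by fun_prop) continuous_const

instance : CompactSpace (DualSp r M) :=
  isCompact_iff_compactSpace.mp <| IsClosed.isCompact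
    (s := {y : ℕ → Fin r | ∀ j, M (y (j + 1)) (y j) = true}) <| by
    simp only [Set.ofPred_forall]
    exact isClosed_iInter fun j => isClosed_eq (by fun_prop) continuous_const

instance : CompactSpace (NatExt r M) :=
  isCompact_iff_compactSpace.mp <| IsClosed.isCompact
    (s := {p : DualSp r M × SigSp r M | M (p.1.1 0) (p.2.1 0) = true}) <|
    isClosed_eq (by fun_prop) continuous_const

@[fun_prop]
theorem continuous_proj1 : Continuous (proj1 (r := r) (M := M)) :=
  continuous_snd.comp continuous_subtype_val

@[fun_prop]
theorem continuous_tau : Continuous (tau (r := r) (M := M)) := by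
  refine Continuous.subtype_mk (continuous_pi fun n => ?_) _
  cases n <;> simp only [prepend] <;> fun_prop

theorem Holonomic.integral_add_coboundary {μ : Measure (NatExt r M)} (hμ : Holonomic μ)
    {A : NatExt r M → ℝ} (hA : Integrable A μ) {u : SigSp r M → ℝ} (hu : Continuous u) :
    ∫ p, (A p + u (proj1 p) - u (tau p)) ∂μ = ∫ p, A p ∂μ := by
  have := hμ.1
  have hπ : Integrable (fun p => u (proj1 p)) μ :=
    (hu.comp continuous_proj1).integrable_of_hasCompactSupport (.of_compactSpace _)
  have hτ : Integrable (fun p => u (tau p)) μ :=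
    (hu.comp continuous_tau).integrable_of_hasCompactSupport (.of_compactSpace _)
  have hhol : ∫ p, u (tau p) ∂μ = ∫ p, u (proj1 p) ∂μ := hμ.2 ⟨u, hu⟩
  have hAπ : Integrable (fun p => A p + u (proj1 p)) μ := hA.add hπ
  rw [integral_sub hAπ hτ, integral_add hA hπ, hhol, add_sub_cancel_right]

end ShiftSpaces

theorem msupport_eq_measureSupport {X : Type*} [TopologicalSpace X] [MeasurableSpace X]
    (μ : Measure X) : msupport μ = μ.support := by
  rw [Measure.support_eq_forall_isOpen]
  ext x
  exact forall_congr' fun U => Imp.swap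

theorem Continuous.integral_eq_zero_iff_measureSupport_subset {X : Type*} [TopologicalSpace X]
    [MeasurableSpace X] [HereditarilyLindelofSpace X] {μ : Measure X} {g : X → ℝ}
    (hg : Continuous g) (hg0 : 0 ≤ g) (hgi : Integrable g μ) :
    ∫ x, g x ∂μ = 0 ↔ μ.support ⊆ {x | g x = 0} := by
  rw [integral_eq_zero_iff_of_nonneg hg0 hgi]
  exact ⟨Measure.support_subset_of_isClosed (isClosed_eq hg continuous_const),
    Filter.mem_of_superset Measure.support_mem_ae⟩

/-- a holonomic probability is `A`-maximizing iff its support lies in the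
contact locus `M_A(u)` of any sub-action `u`. -/
theorem maximizing_iff_support
    {r : ℕ} {M : Fin r → Fin r → Bool}
    (A : NatExt r M → ℝ) (hA : Continuous A)
    (u : SigSp r M → ℝ) (hu : SubAction A u)
    (μ : Measure (NatExt r M)) (hμ : Holonomic μ) :
    (∫ p, A p ∂μ) = betaA A ↔
      msupport μ ⊆ {p : NatExt r M | A p + u (proj1 p) - u (tau p) = betaA A} := by
  obtain ⟨hu, hsub⟩ := hu
  have := hμ.1
  set g : NatExt r M → ℝ := fun p => betaA A - (A p + u (proj1 p) - u (tau p))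
  have hg : Continuous g := by fun_prop
  have hg0 : 0 ≤ g := fun p => sub_nonneg.mpr (by linarith [hsub p])
  have hgap : ∫ p, g p ∂μ = betaA A - ∫ p, A p ∂μ := by
    have hcob : Continuous fun p => A p + u (proj1 p) - u (tau p) := by fun_prop
    rw [integral_sub (integrable_const _)
        (hcob.integrable_of_hasCompactSupport (.of_compactSpace _)),
      hμ.integral_add_coboundary (hA.integrable_of_hasCompactSupport (.of_compactSpace A)) hu,
      integral_const, probReal_univ, one_smul]
  have hzero : {p | g p = 0} = {p | A p + u (proj1 p) - u (tau p) = betaA A} := by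
    ext p
    exact sub_eq_zero.trans eq_comm
  rw [msupport_eq_measureSupport, ← hzero,
    ← hg.integral_eq_zero_iff_measureSupport_subset hg0
      (hg.integrable_of_hasCompactSupport (.of_compactSpace g)),
    hgap, sub_eq_zero, eq_comm]
end
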